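/- arXiv:2403.09909 — 5 statements merged into one kernel-verified Lean document; each statement's English description precedes it below -/
import Mathlib

section
/- The number of surjective Z_p-linear maps from Z_p^n onto a finite abelian p-group G of rank r = dim_{F_p}(G/pG), with r ≤ n, equals |G|^n · ∏_{i=n-r+1}^{n} (1 - p^{-i}). -/
open Pointwise Function Submodule Module Matrix

/-- Fiber counting for a surjective additive hom. -/
lemma card_comp_mul {G Q : Type*} [AddCommGroup G] [AddCommGroup Q]
    (f : G →+ Q) (hf : Function.Surjective f) (P : Q → Prop) :
    Nat.card {a : G // P (f a)} = Nat.card {q : Q // P q} * Nat.card f.ker := by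
  classical
  choose s hs using hf
  have e : {a : G // P (f a)} ≃ {q : Q // P q} × f.ker :=
  { toFun := fun a => (⟨f a.1, a.2⟩, ⟨a.1 - s (f a.1), by
      simp [AddMonoidHom.mem_ker, map_sub, hs]⟩)
    invFun := fun x => ⟨x.2.1 + s x.1.1, by
      have h1 : f (x.2.1 + s x.1.1) = x.1.1 := by
        simp [map_add, hs, AddMonoidHom.mem_ker.mp x.2.2]
      rw [h1]; exact x.1.2⟩
    left_inv := fun a => Subtype.ext (by simp)
    right_inv := fun x => by
      have h1 : f (x.2.1 + s x.1.1) = x.1.1 := by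
        simp [map_add, hs, AddMonoidHom.mem_ker.mp x.2.2]
      refine Prod.ext ?_ ?_
      · exact Subtype.ext h1
      · refine Subtype.ext ?_
        simp only [h1]
        exact add_sub_cancel_right _ _ }
  rw [Nat.card_congr e, Nat.card_prod]

lemma span_eq_top_iff_closure {R M : Type*} [Ring R] [AddCommGroup M] [Module R M]
    (H : ∀ (r : R) (x : M), ∃ m : ℤ, r • x = m • x) (S : Set M) :
    span R S = ⊤ ↔ AddSubgroup.closure S = ⊤ := by
  have key : ∀ x : M, x ∈ span R S ↔ x ∈ AddSubgroup.closure S := by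
    intro x
    constructor
    · intro hx
      refine Submodule.span_induction (fun y hy => AddSubgroup.subset_closure hy)
        (AddSubgroup.zero_mem _) (fun y z _ _ hy hz => AddSubgroup.add_mem _ hy hz)
        (fun r y _ hy => ?_) hx
      obtain ⟨m, hm⟩ := H r y
      rw [hm]
      exact AddSubgroup.zsmul_mem _ hy m
    · intro hx
      refine AddSubgroup.closure_induction (fun y hy => Submodule.subset_span hy)
        (Submodule.zero_mem _) (fun y z _ _ hy hz => Submodule.add_mem _ hy hz)
        (fun y _ hy => Submodule.neg_mem _ hy) hx
  rw [Submodule.eq_top_iff', AddSubgroup.eq_top_iff']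
  exact forall_congr' key

lemma card_spanning_tuples (K V : Type*) [Field K] [Fintype K] [AddCommGroup V] [Module K V]
    [Finite V] (n : ℕ) (hn : Module.finrank K V ≤ n) :
    Nat.card {w : Fin n → V // span K (Set.range w) = ⊤}
      = ∏ i : Fin (Module.finrank K V), (Fintype.card K ^ n - Fintype.card K ^ i.val) := by
  classical
  set r := Module.finrank K V with hr
  let e : V ≃ₗ[K] (Fin r → K) := (Module.finBasis K V).equivFun
  have e1 : {w : Fin n → V // span K (Set.range w) = ⊤}
      ≃ {M : Matrix (Fin n) (Fin r) K // span K (Set.range M) = ⊤} := by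
    refine Equiv.subtypeEquiv (Equiv.piCongrRight fun _ => e.toEquiv) fun w => ?_
    show span K (Set.range w) = ⊤ ↔ span K (Set.range (⇑e ∘ w)) = ⊤
    rw [Set.range_comp, ← LinearEquiv.coe_coe, ← Submodule.map_span]
    rw [LinearMap.map_eq_top_iff ((LinearMap.range_eq_top (f := (e : V →ₗ[K] (Fin r → K)))).mpr e.surjective),
      show LinearMap.ker (e : V →ₗ[K] (Fin r → K)) = ⊥ from (LinearMap.ker_eq_bot (f := (e : V →ₗ[K] (Fin r → K)))).mpr e.injective, sup_bot_eq]
  have key : ∀ M : Matrix (Fin n) (Fin r) K,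
      span K (Set.range M) = ⊤ ↔ LinearIndependent K (fun i => Mᵀ i) := by
    intro M
    have hs : Function.Surjective M.vecMulLinear ↔ M.rank = r := by
      rw [← LinearMap.range_eq_top, ← Matrix.mulVecLin_transpose, ← Matrix.rank_transpose M,
        Matrix.rank]
      constructor
      · intro h
        rw [h]
        simp [Module.finrank_fintype_fun_eq_card]
      · intro h
        apply Submodule.eq_top_of_finrank_eq
        rw [h]
        simp [Module.finrank_fintype_fun_eq_card]
    have hi : Function.Injective M.mulVec ↔ M.rank = r := by
      rw [← Matrix.coe_mulVecLin, ← LinearMap.ker_eq_bot]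
      have hrk := LinearMap.finrank_range_add_finrank_ker M.mulVecLin
      rw [Module.finrank_fintype_fun_eq_card, Fintype.card_fin] at hrk
      rw [Matrix.rank]
      constructor
      · intro h
        rw [h, finrank_bot] at hrk
        omega
      · intro h
        have h0 : finrank K (LinearMap.ker M.mulVecLin) = 0 := by omega
        exact Submodule.finrank_eq_zero.mp h0
    rw [show Set.range M = Set.range M.row from rfl, ← range_vecMulLinear, LinearMap.range_eq_top, hs, ← hi,
      Matrix.mulVec_injective_iff]
    exact Iff.rfl
  have e2 : {M : Matrix (Fin n) (Fin r) K // LinearIndependent K (fun i => Mᵀ i)}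
      ≃ {s : Fin r → Fin n → K // LinearIndependent K s} :=
  { toFun := fun M => ⟨fun i => M.1ᵀ i, M.2⟩
    invFun := fun s => ⟨(Matrix.of s.1)ᵀ, s.2⟩
    left_inv := fun M => Subtype.ext rfl
    right_inv := fun s => Subtype.ext rfl }
  have := Nat.card_congr ((e1.trans (Equiv.subtypeEquivRight fun M => key M)).trans e2)
  rw [this, card_linearIndependent (K := K) (V := Fin n → K)
    (by simpa [Module.finrank_fintype_fun_eq_card] using hn)]
  simp [Module.finrank_fintype_fun_eq_card]

lemma padic_kill {p : ℕ} [hp : Fact p.Prime] {G : Type} [AddCommGroup G] [Module ℤ_[p] G]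
    [Finite G] : ∃ k : ℕ, ∀ x : G, ((p : ℤ_[p]) ^ k) • x = 0 := by
  have hcard : ∀ x : G, (Nat.card G : ℤ_[p]) • x = 0 := fun x => by
    rw [Nat.cast_smul_eq_nsmul]
    exact card_nsmul_eq_zero'
  have h0 : (Nat.card G : ℤ_[p]) ≠ 0 := by
    have h1 : Nat.card G ≠ 0 := Nat.card_pos.ne'
    exact_mod_cast h1
  set u := PadicInt.unitCoeff h0 with hu
  refine ⟨((Nat.card G : ℤ_[p])).valuation, fun x => ?_⟩
  calc ((p:ℤ_[p]) ^ ((Nat.card G : ℤ_[p])).valuation) • x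
      = (((u⁻¹ : ℤ_[p]ˣ) : ℤ_[p]) * ((u : ℤ_[p]) *
          (p:ℤ_[p]) ^ ((Nat.card G : ℤ_[p])).valuation)) • x := by
        rw [← mul_assoc]
        norm_num
    _ = ((u⁻¹ : ℤ_[p]ˣ) : ℤ_[p]) • ((Nat.card G : ℤ_[p]) • x) := by
        rw [← PadicInt.unitCoeff_spec h0, mul_smul]
    _ = 0 := by rw [hcard x, smul_zero]

lemma nakayama_padic {p : ℕ} [hp : Fact p.Prime] {G : Type} [AddCommGroup G] [Module ℤ_[p] G]
    [Finite G] (S : Submodule ℤ_[p] G)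
    (h : S ⊔ (p : ℤ_[p]) • (⊤ : Submodule ℤ_[p] G) = ⊤) : S = ⊤ := by
  obtain ⟨k, hk⟩ := padic_kill (p := p) (G := G)
  have hle : ∀ (a : ℤ_[p]) (T : Submodule ℤ_[p] G), a • T ≤ T := by
    intro a T x hx
    have hx' : x ∈ a • (T : Set G) := by
      rw [← Submodule.coe_pointwise_smul]; exact hx
    obtain ⟨y, hy, rfl⟩ := hx'
    exact T.smul_mem a hy
  have hbot : ((p:ℤ_[p]) ^ k) • (⊤ : Submodule ℤ_[p] G) = ⊥ := by
    refine le_antisymm (fun x hx => ?_) bot_le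
    have hx' : x ∈ ((p:ℤ_[p]) ^ k) • ((⊤ : Submodule ℤ_[p] G) : Set G) := by
      rw [← Submodule.coe_pointwise_smul]; exact hx
    obtain ⟨y, -, rfl⟩ := hx'
    simpa using hk y
  have hind : ∀ m : ℕ, S ⊔ ((p:ℤ_[p]) ^ m) • (⊤ : Submodule ℤ_[p] G) = ⊤ := by
    intro m
    induction m with
    | zero => simp
    | succ m ih =>
      have step : ((p:ℤ_[p]) ^ m) • (⊤ : Submodule ℤ_[p] G)
          = ((p:ℤ_[p]) ^ m) • S ⊔ ((p:ℤ_[p]) ^ (m+1)) • (⊤ : Submodule ℤ_[p] G) := by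
        conv_lhs => rw [← h]
        rw [Submodule.smul_sup', smul_smul, ← pow_succ]
      have : (⊤ : Submodule ℤ_[p] G) = (S ⊔ ((p:ℤ_[p]) ^ m) • S)
          ⊔ ((p:ℤ_[p]) ^ (m+1)) • (⊤ : Submodule ℤ_[p] G) := by
        rw [sup_assoc, ← step, ih]
      rw [sup_eq_left.mpr (hle _ S)] at this
      exact this.symm
  have := hind k
  rwa [hbot, sup_bot_eq] at this

lemma final_arith (p : ℕ) (hp2 : 2 ≤ p) (n r κ : ℕ) (hrn : r ≤ n) :
    (((∏ i : Fin r, (p ^ n - p ^ (i : ℕ))) * κ ^ n : ℕ) : ℚ)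
      = (((p ^ r * κ : ℕ) : ℚ)) ^ n *
        ∏ i ∈ Finset.Icc (n - r + 1) n, (1 - (p : ℚ) ^ (-(i : ℤ))) := by
  have hp0 : (p : ℚ) ≠ 0 := by positivity
  have hprod : ((∏ i : Fin r, (p ^ n - p ^ (i : ℕ)) : ℕ) : ℚ)
      = ∏ i : Fin r, ((p : ℚ) ^ n - (p : ℚ) ^ (i : ℕ)) := by
    rw [Nat.cast_prod]
    refine Finset.prod_congr rfl fun i _ => ?_
    rw [Nat.cast_sub (Nat.pow_le_pow_right (by omega) (by omega))]
    push_cast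
    ring
  rw [Nat.cast_mul, hprod]
  push_cast
  rw [mul_pow]
  have hcard : (Finset.Icc (n - r + 1) n).card = r := by
    rw [Nat.card_Icc]; omega
  have hconst : ((p : ℚ) ^ r) ^ n = ∏ _i ∈ Finset.Icc (n - r + 1) n, (p : ℚ) ^ n := by
    rw [Finset.prod_const, hcard, ← pow_mul, ← pow_mul, mul_comm]
  rw [mul_comm (((p:ℚ)^r)^n) ((κ:ℚ)^n), mul_assoc, hconst, ← Finset.prod_mul_distrib]
  rw [mul_comm]
  congr 1
  refine Finset.prod_bij' (fun (j : Fin r) _ => n - (j : ℕ))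
    (fun i hi => (⟨n - i, by simp only [Finset.mem_Icc] at hi; omega⟩ : Fin r)) ?_ ?_ ?_ ?_ ?_
  · intro a ha
    simp only [Finset.mem_Icc]
    omega
  · intro a ha
    exact Finset.mem_univ _
  · intro a ha
    have := a.2
    apply Fin.ext
    simp only []
    omega
  · intro a ha
    simp only [Finset.mem_Icc] at ha
    simp only []
    omega
  · intro j hj
    have hj2 := j.2
    have hjn : (j : ℕ) ≤ n := by omega
    have hzp : (p : ℚ) ^ n * (p : ℚ) ^ (-((n - (j:ℕ) : ℕ) : ℤ)) = (p : ℚ) ^ (j:ℕ) := by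
      rw [← zpow_natCast (p:ℚ) n, ← zpow_natCast (p:ℚ) (j:ℕ), ← zpow_add₀ hp0]
      congr 1
      rw [Nat.cast_sub hjn]
      ring
    rw [mul_one_sub, hzp]

open Pointwise
/-- The number of surjective `ℤ_p`-linear maps `ℤ_p^n ↠ G`, for a finite `ℤ_p`-module `G`
of rank `r = dim_{F_p}(G/pG) ≤ n`, equals `|G|^n · ∏_{i=n-r+1}^{n} (1 - p^{-i})`. -/
theorem count_surjections_onto_finite_module
    (p : ℕ) [Fact p.Prime] (n r : ℕ) (G : Type)
    [AddCommGroup G] [Module ℤ_[p] G] [Finite G]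
    (hr : Nat.card (G ⧸ ((p : ℤ_[p]) • (⊤ : Submodule ℤ_[p] G))) = p ^ r)
    (hrn : r ≤ n) :
    (Nat.card {f : (Fin n → ℤ_[p]) →ₗ[ℤ_[p]] G // Function.Surjective f} : ℚ)
      = (Nat.card G : ℚ) ^ n *
        ∏ i ∈ Finset.Icc (n - r + 1) n, (1 - (p : ℚ) ^ (-(i : ℤ))) := by
  classical
  have hp : p.Prime := Fact.out
  haveI : NeZero p := ⟨hp.ne_zero⟩
  set N : Submodule ℤ_[p] G := (p : ℤ_[p]) • ⊤ with hN
  haveI : Finite (G ⧸ N) := Finite.of_surjective _ (Submodule.mkQ_surjective N)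
  -- `p` kills the quotient
  have hpQ : ∀ x : G ⧸ N, (p : ℤ_[p]) • x = 0 := by
    intro x
    obtain ⟨y, rfl⟩ := Submodule.mkQ_surjective N x
    rw [show N.mkQ y = Submodule.Quotient.mk y from rfl, ← Submodule.Quotient.mk_smul,
      Submodule.Quotient.mk_eq_zero]
    rw [hN]
    exact Submodule.smul_mem_pointwise_smul y _ ⊤ trivial
  haveI instZ : Module (ZMod p) (G ⧸ N) := AddCommGroup.zmodModule (fun x => by
    rw [← Nat.cast_smul_eq_nsmul ℤ_[p] p x]
    exact hpQ x)
  -- Step A : maps correspond to tuples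
  let E : (Fin n → G) ≃ₗ[ℤ_[p]] ((Fin n → ℤ_[p]) →ₗ[ℤ_[p]] G) :=
    (Pi.basisFun ℤ_[p] (Fin n)).constr ℤ_[p]
  have eA : {v : Fin n → G // span ℤ_[p] (Set.range v) = ⊤}
      ≃ {f : (Fin n → ℤ_[p]) →ₗ[ℤ_[p]] G // Function.Surjective f} :=
    Equiv.subtypeEquiv E.toEquiv fun v => by
      rw [← LinearMap.range_eq_top]
      show span ℤ_[p] (Set.range v) = ⊤ ↔ LinearMap.range (E v) = ⊤
      rw [show E v = (Pi.basisFun ℤ_[p] (Fin n)).constr ℤ_[p] v from rfl, Basis.constr_range]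
  -- Step B : Nakayama
  have hNak : ∀ v : Fin n → G,
      span ℤ_[p] (Set.range v) = ⊤ ↔ span ℤ_[p] (Set.range (⇑N.mkQ ∘ v)) = ⊤ := by
    intro v
    rw [Set.range_comp, ← Submodule.map_span,
      LinearMap.map_eq_top_iff (LinearMap.range_eq_top.mpr (Submodule.mkQ_surjective N)),
      Submodule.ker_mkQ]
    constructor
    · intro h
      rw [h, top_sup_eq]
    · intro h
      rw [hN] at h
      exact nakayama_padic _ h
  -- Step C : fibration counting
  set π : G →+ (G ⧸ N) := N.mkQ.toAddMonoidHom with hπ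
  have hπs : Function.Surjective (π.compLeft (Fin n)) :=
    (Submodule.mkQ_surjective N).comp_left
  have hcount := card_comp_mul (π.compLeft (Fin n)) hπs
      (fun w => span ℤ_[p] (Set.range w) = ⊤)
  have hbridge : {v : Fin n → G // span ℤ_[p] (Set.range (⇑N.mkQ ∘ v)) = ⊤}
      ≃ {v : Fin n → G // span ℤ_[p] (Set.range ((π.compLeft (Fin n)) v)) = ⊤} :=
    Equiv.subtypeEquivRight fun v => Iff.rfl
  have hker : Nat.card (AddMonoidHom.ker (π.compLeft (Fin n))) = (Nat.card N) ^ n := by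
    have e : (AddMonoidHom.ker (π.compLeft (Fin n))) ≃ (Fin n → N) :=
      (Equiv.subtypeEquivRight (fun v => by
        simp only [AddMonoidHom.mem_ker, AddMonoidHom.compLeft_apply, funext_iff]
        exact forall_congr' fun i => by
          rw [show (π ∘ v) i = Submodule.Quotient.mk (v i) from rfl]
          simp [Submodule.Quotient.mk_eq_zero])).trans (Equiv.subtypePiEquivPi)
    rw [Nat.card_congr e, Nat.card_pi, Finset.prod_const, Finset.card_univ, Fintype.card_fin]
  -- card G = p^r * card N
  have hG : Nat.card G = p ^ r * Nat.card N := by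
    have h0 := card_comp_mul π (Submodule.mkQ_surjective N) (fun _ => True)
    have h1 : Nat.card {a : G // True} = Nat.card G :=
      Nat.card_congr (Equiv.subtypeUnivEquiv fun _ => trivial)
    have h2 : Nat.card {q : G ⧸ N // True} = p ^ r := by
      rw [Nat.card_congr (Equiv.subtypeUnivEquiv fun _ => trivial)]
      exact hr
    have h3 : Nat.card π.ker = Nat.card N :=
      Nat.card_congr (Equiv.subtypeEquivRight fun g => by
        rw [AddMonoidHom.mem_ker, show π g = Submodule.Quotient.mk g from rfl]
        simp [Submodule.Quotient.mk_eq_zero])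
    rw [h1, h2, h3] at h0
    exact h0
  -- Step D : count spanning tuples in the quotient
  haveI : Fintype (G ⧸ N) := Fintype.ofFinite _
  have hfr : Module.finrank (ZMod p) (G ⧸ N) = r := by
    have hc : Fintype.card (G ⧸ N) = Fintype.card (ZMod p) ^ Module.finrank (ZMod p) (G ⧸ N) :=
      card_eq_pow_finrank
    rw [ZMod.card] at hc
    have heq : p ^ r = p ^ Module.finrank (ZMod p) (G ⧸ N) := by
      rw [← hr, Nat.card_eq_fintype_card, hc]
    exact (Nat.pow_right_injective hp.two_le heq).symm
  have hQcount : Nat.card {w : Fin n → (G ⧸ N) // span ℤ_[p] (Set.range w) = ⊤}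
      = ∏ i : Fin r, (p ^ n - p ^ (i : ℕ)) := by
    have hZp : ∀ (c : ℤ_[p]) (x : G ⧸ N), ∃ m : ℤ, c • x = m • x := by
      intro c x
      refine ⟨((PadicInt.appr c 1 : ℕ) : ℤ), ?_⟩
      have h1 := PadicInt.appr_spec 1 c
      rw [pow_one, Ideal.mem_span_singleton] at h1
      obtain ⟨d, hd⟩ := h1
      have h3 : c • x - ((PadicInt.appr c 1 : ℕ) : ℤ_[p]) • x = 0 := by
        rw [← sub_smul, hd, mul_smul, hpQ (d • x)]
      have h2 : c • x = ((PadicInt.appr c 1 : ℕ) : ℤ_[p]) • x := sub_eq_zero.mp h3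
      calc c • x = ((PadicInt.appr c 1 : ℕ) : ℤ_[p]) • x := h2
        _ = ((((PadicInt.appr c 1 : ℕ) : ℤ)) : ℤ_[p]) • x := by norm_cast
        _ = ((PadicInt.appr c 1 : ℕ) : ℤ) • x := Int.cast_smul_eq_zsmul _ _ _
    have hZmod : ∀ (c : ZMod p) (x : G ⧸ N), ∃ m : ℤ, c • x = m • x := by
      intro c x
      refine ⟨(ZMod.cast c : ℤ), ?_⟩
      conv_lhs => rw [← ZMod.intCast_zmod_cast c]
      exact Int.cast_smul_eq_zsmul _ _ _
    have hiff : ∀ w : Fin n → (G ⧸ N),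
        (span ℤ_[p] (Set.range w) = ⊤) ↔ (span (ZMod p) (Set.range w) = ⊤) :=
      fun w => (span_eq_top_iff_closure hZp _).trans (span_eq_top_iff_closure hZmod _).symm
    rw [Nat.card_congr (Equiv.subtypeEquivRight hiff)]
    have hfin := card_spanning_tuples (ZMod p) (G ⧸ N) n (by rw [hfr]; exact hrn)
    rw [hfr, ZMod.card] at hfin
    exact hfin
  -- Assemble
  have htotal : Nat.card {f : (Fin n → ℤ_[p]) →ₗ[ℤ_[p]] G // Function.Surjective f}
      = (∏ i : Fin r, (p ^ n - p ^ (i : ℕ))) * (Nat.card N) ^ n := by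
    rw [Nat.card_congr eA.symm, Nat.card_congr (Equiv.subtypeEquivRight hNak),
      Nat.card_congr hbridge, hcount, hker, hQcount]
  rw [htotal, hG]
  exact final_arith p hp.two_le n r (Nat.card N) hrn
end

section
/- The number of submodules F ⊆ Z_p^n such that Z_p^n/F is isomorphic to a fixed finite abelian p-group G of rank r ≤ n equals (|G|^n / |Aut(G)|) · ∏_{i=n-r+1}^{n} (1 - p^{-i}). -/
open Pointwise

section CountSurj
variable {K : Type*} [Field K] [Fintype K] {V : Type*} [AddCommGroup V] [Module K V] [Finite V]

omit [Fintype K] in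
theorem aux_surj_iff_rows_li {r n : ℕ} (A : Matrix (Fin r) (Fin n) K) :
    Function.Surjective A.mulVecLin ↔ LinearIndependent K (fun j => A j) := by
  constructor
  · intro h
    have hrk : A.rank = r := by
      rw [Matrix.rank, LinearMap.range_eq_top.2 h, finrank_top,
        Module.finrank_fintype_fun_eq_card, Fintype.card_fin]
    rw [linearIndependent_iff_card_eq_finrank_span, Fintype.card_fin]
    have h2 := A.rank_eq_finrank_span_row
    rw [hrk] at h2
    exact h2
  · intro h
    have hrk : A.rank = r := by
      have := LinearIndependent.rank_matrix (M := A) h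
      rwa [Fintype.card_fin] at this
    rw [← LinearMap.range_eq_top]
    apply Submodule.eq_top_of_finrank_eq
    rw [← Matrix.rank] at *
    rw [hrk, Module.finrank_fintype_fun_eq_card, Fintype.card_fin]

theorem aux_card_surj (n : ℕ) (hk : Module.finrank K V ≤ n) :
    Nat.card {f : (Fin n → K) →ₗ[K] V // Function.Surjective f} =
      ∏ i : Fin (Module.finrank K V), (Fintype.card K ^ n - Fintype.card K ^ (i : ℕ)) := by
  classical
  set r := Module.finrank K V with hrdef
  let b : Module.Basis (Fin r) K V := Module.finBasis K V
  let e : V ≃ₗ[K] (Fin r → K) := b.equivFun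
  let E1 : {f : (Fin n → K) →ₗ[K] V // Function.Surjective f} ≃
      {f : (Fin n → K) →ₗ[K] (Fin r → K) // Function.Surjective f} :=
    (Equiv.subtypeEquiv (LinearEquiv.arrowCongr (LinearEquiv.refl K (Fin n → K)) e).toEquiv
      (fun f => by
        simp only [LinearEquiv.coe_toEquiv, LinearEquiv.arrowCongr_apply]
        constructor
        · intro hf y
          obtain ⟨x, hx⟩ := hf (e.symm y)
          exact ⟨x, by simpa using congrArg e hx⟩
        · intro hf y
          obtain ⟨x, hx⟩ := hf (e y)
          refine ⟨x, ?_⟩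
          have := congrArg e.symm hx
          simpa using this))
  let E2 : {f : (Fin n → K) →ₗ[K] (Fin r → K) // Function.Surjective f} ≃
      {A : Matrix (Fin r) (Fin n) K // LinearIndependent K (fun j => A j)} :=
    (Equiv.subtypeEquiv (LinearMap.toMatrix' (R := K)).toEquiv
      (fun f => by
        simp only [LinearEquiv.coe_toEquiv]
        rw [← aux_surj_iff_rows_li, ← Matrix.toLin'_apply', Matrix.toLin'_toMatrix']))
  let E3 : {A : Matrix (Fin r) (Fin n) K // LinearIndependent K (fun j => A j)} ≃
      {s : Fin r → (Fin n → K) // LinearIndependent K s} :=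
    (Equiv.subtypeEquiv (Matrix.of (m := Fin r) (n := Fin n) (α := K)).symm (fun A => Iff.rfl))
  rw [Nat.card_congr ((E1.trans E2).trans E3)]
  have hfr : Module.finrank K (Fin n → K) = n := by
    rw [Module.finrank_fintype_fun_eq_card, Fintype.card_fin]
  rw [card_linearIndependent (K := K) (V := Fin n → K) (by rw [hfr]; exact hk)]
  simp [hfr]
end CountSurj

set_option maxHeartbeats 2000000 in
/-- The number of submodules `F ⊆ ℤ_p^n` with `ℤ_p^n/F ≅ G`, for a finite `ℤ_p`-module `G`
of rank `r ≤ n`, equals `(|G|^n / |Aut(G)|) · ∏_{i=n-r+1}^{n} (1 - p^{-i})`. -/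
theorem count_submodules_with_quotient_iso
    (p : ℕ) [Fact p.Prime] (n r : ℕ) (G : Type)
    [AddCommGroup G] [Module ℤ_[p] G] [Finite G]
    (hr : Nat.card (G ⧸ ((p : ℤ_[p]) • (⊤ : Submodule ℤ_[p] G))) = p ^ r)
    (hrn : r ≤ n) :
    (Nat.card {F : Submodule ℤ_[p] (Fin n → ℤ_[p]) //
        Nonempty (((Fin n → ℤ_[p]) ⧸ F) ≃ₗ[ℤ_[p]] G)} : ℚ)
      = (Nat.card G : ℚ) ^ n / (Nat.card (G ≃ₗ[ℤ_[p]] G) : ℚ) *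
        ∏ i ∈ Finset.Icc (n - r + 1) n, (1 - (p : ℚ) ^ (-(i : ℤ))) := by
  classical
  have hp : p.Prime := Fact.out
  set R := ℤ_[p]
  set M := (Fin n → ℤ_[p]) with hM
  set P : Submodule R G := (p : ℤ_[p]) • (⊤ : Submodule R G) with hP
  set V := G ⧸ P with hV
  set π : G →ₗ[R] V := P.mkQ with hπ
  -- p kills V
  have hpV : ∀ x : V, (p : ℤ_[p]) • x = 0 := by
    intro x
    obtain ⟨g, rfl⟩ := P.mkQ_surjective x
    rw [← map_smul, Submodule.mkQ_apply, Submodule.Quotient.mk_eq_zero]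
    exact Submodule.smul_mem_pointwise_smul g _ ⊤ trivial
  have hpV' : ∀ x : V, p • x = 0 := fun x => by
    rw [← Nat.cast_smul_eq_nsmul R]; exact hpV x
  haveI : Module (ZMod p) V := AddCommGroup.zmodModule hpV'
  -- compatibility of scalar actions
  have hcompat : ∀ (c : ℤ_[p]) (x : V), c • x = (PadicInt.toZMod c) • x := by
    intro c x
    set m : ℕ := (PadicInt.toZMod c).val with hm
    have h1 : PadicInt.toZMod ((m : ℤ_[p]) - c) = 0 := by
      rw [map_sub, map_natCast, hm, ZMod.natCast_rightInverse _, sub_self]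
    have h2 : (m : ℤ_[p]) - c ∈ Ideal.span {(p : ℤ_[p])} := by
      rw [← PadicInt.maximalIdeal_eq_span_p, ← PadicInt.ker_toZMod, RingHom.mem_ker]
      exact h1
    obtain ⟨d, hd⟩ := Ideal.mem_span_singleton'.1 h2
    have hc : c = (m : ℤ_[p]) - d * (p : ℤ_[p]) := by linear_combination hd
    have : c • x = (m : ℤ_[p]) • x := by
      rw [hc, sub_smul, mul_smul, hpV, smul_zero, sub_zero]
    rw [this, Nat.cast_smul_eq_nsmul, ← Nat.cast_smul_eq_nsmul (ZMod p), hm,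
      ZMod.natCast_rightInverse]
  have hcompat' : ∀ (m : ZMod p) (x : V), m • x = ((m.val : ℤ_[p])) • x := by
    intro m x
    rw [Nat.cast_smul_eq_nsmul, ← Nat.cast_smul_eq_nsmul (ZMod p), ZMod.natCast_rightInverse]
  -- spans over the two rings agree
  have hmem : ∀ (s : Set V) (x : V), x ∈ Submodule.span ℤ_[p] s ↔ x ∈ Submodule.span (ZMod p) s := by
    intro s x
    constructor
    · intro hx
      let W : Submodule ℤ_[p] V :=
        { toAddSubmonoid := (Submodule.span (ZMod p) s).toAddSubmonoid
          smul_mem' := fun c x hx => by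
            show c • x ∈ Submodule.span (ZMod p) s
            rw [hcompat]
            exact (Submodule.span (ZMod p) s).smul_mem _ hx }
      exact (Submodule.span_le (p := W)).2 Submodule.subset_span hx
    · intro hx
      let W : Submodule (ZMod p) V :=
        { toAddSubmonoid := (Submodule.span ℤ_[p] s).toAddSubmonoid
          smul_mem' := fun c x hx => by
            show c • x ∈ Submodule.span ℤ_[p] s
            rw [hcompat']
            exact (Submodule.span ℤ_[p] s).smul_mem _ hx }
      exact (Submodule.span_le (p := W)).2 Submodule.subset_span hx
  have hspan_top : ∀ s : Set V, Submodule.span ℤ_[p] s = ⊤ ↔ Submodule.span (ZMod p) s = ⊤ := by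
    intro s
    simp only [Submodule.eq_top_iff']
    exact forall_congr' fun x => hmem s x
  -- Nakayama
  have hNak : ∀ N : Submodule R G, N ⊔ P = ⊤ → N = ⊤ := by
    intro N hN
    have hfg : (⊤ : Submodule R G).FG := Module.Finite.fg_top
    have hjac : Ideal.span {(p : ℤ_[p])} ≤ Ideal.jacobson ⊥ := by
      rw [IsLocalRing.jacobson_eq_maximalIdeal ⊥ bot_ne_top, ← PadicInt.maximalIdeal_eq_span_p]
    have key := Submodule.sup_eq_sup_smul_of_le_smul_of_le_jacobson (I := Ideal.span {(p : ℤ_[p])})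
      (J := ⊥) (N := N) (N' := ⊤) hfg hjac ?_
    · rw [Submodule.bot_smul, sup_bot_eq, sup_top_eq] at key
      exact key.symm
    · rw [Submodule.ideal_span_singleton_smul, ← hP, hN]
  -- section of the projection
  have hπs : Function.Surjective π := P.mkQ_surjective
  set sec : V → G := Function.surjInv hπs with hsecdef
  have hsec : ∀ x : V, π (sec x) = x := Function.surjInv_eq hπs
  have hker : ∀ g : G, π g = 0 ↔ g ∈ P := fun g => by
    rw [hπ, Submodule.mkQ_apply, Submodule.Quotient.mk_eq_zero]
  -- |G| = p^r * |P|
  have c6 : Nat.card G = p ^ r * Nat.card P := by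
    have E : G ≃ V × P :=
      { toFun := fun g => (π g, ⟨g - sec (π g), (hker _).1 (by rw [map_sub, hsec, sub_self])⟩)
        invFun := fun x => sec x.1 + x.2.1
        left_inv := fun g => by simp
        right_inv := fun x => by
          have hv : π (sec x.1 + x.2.1) = x.1 := by
            rw [map_add, hsec, (hker _).2 x.2.2, add_zero]
          refine Prod.ext ?_ ?_
          · exact hv
          · apply Subtype.ext
            show (sec x.1 + x.2.1) - sec (π (sec x.1 + x.2.1)) = x.2.1
            rw [hv]
            abel }
    rw [Nat.card_congr E, Nat.card_prod, hr]
  -- spanning tuples in G vs spanning tuples in V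
  have hiff : ∀ v : Fin n → G,
      Submodule.span R (Set.range v) = ⊤ ↔ Submodule.span (ZMod p) (Set.range (⇑π ∘ v)) = ⊤ := by
    intro v
    rw [← hspan_top]
    constructor
    · intro h
      rw [Set.range_comp, ← Submodule.map_span, h, Submodule.map_top, Submodule.range_mkQ]
    · intro h
      apply hNak
      have h2 : Submodule.comap π (Submodule.span ℤ_[p] (Set.range (⇑π ∘ v))) = ⊤ := by
        rw [h]; exact Submodule.comap_top π
      rw [Set.range_comp, ← Submodule.map_span, Submodule.comap_map_eq, Submodule.ker_mkQ] at h2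
      exact h2
  have c3 : Nat.card {v : Fin n → G // Submodule.span R (Set.range v) = ⊤} =
      Nat.card {w : Fin n → V // Submodule.span (ZMod p) (Set.range w) = ⊤} * (Nat.card P) ^ n := by
    have E : {v : Fin n → G // Submodule.span R (Set.range v) = ⊤} ≃
        ({w : Fin n → V // Submodule.span (ZMod p) (Set.range w) = ⊤} × (Fin n → P)) :=
      { toFun := fun v => (⟨⇑π ∘ v.1, (hiff v.1).1 v.2⟩,
          fun i => ⟨v.1 i - sec (π (v.1 i)), (hker _).1 (by rw [map_sub, hsec, sub_self])⟩)
        invFun := fun w => ⟨fun i => sec (w.1.1 i) + (w.2 i).1, by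
          have h3 : ⇑π ∘ (fun i => sec (w.1.1 i) + (w.2 i).1) = w.1.1 := by
            funext i
            show π (sec (w.1.1 i) + (w.2 i).1) = w.1.1 i
            rw [map_add, hsec, (hker _).2 (w.2 i).2, add_zero]
          rw [hiff, h3]
          exact w.1.2⟩
        left_inv := fun v => by
          apply Subtype.ext
          funext i
          simp
        right_inv := fun w => by
          have hv : ∀ i, π (sec (w.1.1 i) + (w.2 i).1) = w.1.1 i := fun i => by
            rw [map_add, hsec, (hker _).2 (w.2 i).2, add_zero]
          refine Prod.ext ?_ ?_
          · apply Subtype.ext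
            funext i
            exact hv i
          · funext i
            apply Subtype.ext
            show (sec (w.1.1 i) + (w.2 i).1) - sec (π (sec (w.1.1 i) + (w.2 i).1)) = (w.2 i).1
            rw [hv i]
            abel }
    rw [Nat.card_congr E, Nat.card_prod, Nat.card_fun, Nat.card_eq_fintype_card (α := Fin n), Fintype.card_fin]
  -- counting spanning tuples in G equals counting surjections M →ₗ G
  have c2 : Nat.card {f : M →ₗ[R] G // Function.Surjective f} =
      Nat.card {v : Fin n → G // Submodule.span R (Set.range v) = ⊤} := by
    let b : Module.Basis (Fin n) R M := Pi.basisFun R (Fin n)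
    have E : {v : Fin n → G // Submodule.span R (Set.range v) = ⊤} ≃
        {f : M →ₗ[R] G // Function.Surjective f} :=
      Equiv.subtypeEquiv (b.constr R (M' := G)).toEquiv (fun v => by
        simp only [LinearEquiv.coe_toEquiv]
        rw [← LinearMap.range_eq_top, Module.Basis.constr_range])
    rw [Nat.card_congr E.symm]
  haveI : SMulCommClass (ZMod p) (ZMod p) V :=
    ⟨fun a b x => by rw [smul_smul, smul_smul, mul_comm]⟩
  have c4 : Nat.card {w : Fin n → V // Submodule.span (ZMod p) (Set.range w) = ⊤} =
      Nat.card {f : (Fin n → ZMod p) →ₗ[ZMod p] V // Function.Surjective f} := by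
    let b : Module.Basis (Fin n) (ZMod p) (Fin n → ZMod p) := Pi.basisFun (ZMod p) (Fin n)
    have E : {w : Fin n → V // Submodule.span (ZMod p) (Set.range w) = ⊤} ≃
        {f : (Fin n → ZMod p) →ₗ[ZMod p] V // Function.Surjective f} :=
      Equiv.subtypeEquiv (b.constr (ZMod p) (M' := V)).toEquiv (fun v => by
        simp only [LinearEquiv.coe_toEquiv]
        rw [← LinearMap.range_eq_top, Module.Basis.constr_range])
    rw [Nat.card_congr E]
  haveI : Finite V := Quotient.finite _
  have hfinrank : Module.finrank (ZMod p) V = r := by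
    haveI : Fintype V := Fintype.ofFinite V
    have h1 : Fintype.card V = Fintype.card (ZMod p) ^ Module.finrank (ZMod p) V :=
      Module.card_eq_pow_finrank
    rw [ZMod.card] at h1
    have h2 : p ^ Module.finrank (ZMod p) V = p ^ r := by
      rw [← h1, ← hr, Nat.card_eq_fintype_card]
    exact Nat.pow_right_injective hp.two_le h2
  subst hfinrank
  have c5 : Nat.card {f : (Fin n → ZMod p) →ₗ[ZMod p] V // Function.Surjective f} =
      ∏ i : Fin (Module.finrank (ZMod p) V), (p ^ n - p ^ (i : ℕ)) := by
    have h1 := aux_card_surj (K := ZMod p) (V := V) n hrn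
    simp only [ZMod.card] at h1
    exact h1
  -- relating submodules-with-quotient-iso to surjections
  have qf : ∀ f : M →ₗ[R] G, Function.Surjective f →
      {e : (M ⧸ LinearMap.ker f) ≃ₗ[R] G // ∀ x, e (Submodule.Quotient.mk x) = f x} := by
    intro f hf
    refine ⟨LinearEquiv.ofBijective ((LinearMap.ker f).liftQ f le_rfl) ⟨?_, ?_⟩, fun x => ?_⟩
    · rw [← LinearMap.ker_eq_bot]
      exact Submodule.ker_liftQ_eq_bot _ _ _ le_rfl
    · intro y
      obtain ⟨x, hx⟩ := hf y
      exact ⟨Submodule.Quotient.mk x, by rwa [Submodule.liftQ_apply]⟩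
    · rfl
  have c1 : Nat.card {f : M →ₗ[R] G // Function.Surjective f} =
      Nat.card {F : Submodule R M // Nonempty ((M ⧸ F) ≃ₗ[R] G)} * Nat.card (G ≃ₗ[R] G) := by
    set T := {F : Submodule R M // Nonempty ((M ⧸ F) ≃ₗ[R] G)} with hT
    let eF : ∀ F : T, (M ⧸ F.1) ≃ₗ[R] G := fun F => F.2.some
    let Ψ : T × (G ≃ₗ[R] G) → {f : M →ₗ[R] G // Function.Surjective f} :=
      fun x => ⟨(x.2 : G →ₗ[R] G) ∘ₗ ((eF x.1 : (M ⧸ x.1.1) ≃ₗ[R] G) : (M ⧸ x.1.1) →ₗ[R] G) ∘ₗ x.1.1.mkQ,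
        x.2.surjective.comp ((eF x.1).surjective.comp x.1.1.mkQ_surjective)⟩
    have hΨapp : ∀ (x : T × (G ≃ₗ[R] G)) (y : M),
        (Ψ x).1 y = x.2 ((eF x.1) (Submodule.Quotient.mk y)) := fun x y => rfl
    have hker' : ∀ x : T × (G ≃ₗ[R] G), LinearMap.ker (Ψ x).1 = x.1.1 := by
      intro x
      ext y
      rw [LinearMap.mem_ker, hΨapp, LinearEquiv.map_eq_zero_iff, LinearEquiv.map_eq_zero_iff,
        Submodule.Quotient.mk_eq_zero]
    have hbij : Function.Bijective Ψ := by
      constructor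
      · rintro ⟨F, σ⟩ ⟨F', σ'⟩ h
        have h1 : F = F' := Subtype.ext (by rw [← hker' ⟨F, σ⟩, ← hker' ⟨F', σ'⟩, h])
        subst h1
        have h2 : σ = σ' := by
          apply LinearEquiv.toLinearMap_injective
          apply LinearMap.ext
          intro g
          obtain ⟨z, hz⟩ := (eF F).surjective g
          obtain ⟨y, hy⟩ := F.1.mkQ_surjective z
          have h3 := congrArg (fun t => t.1 y) h
          beta_reduce at h3
          rw [hΨapp, hΨapp] at h3
          rw [Submodule.mkQ_apply] at hy
          rw [hy, hz] at h3
          exact h3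
        rw [h2]
      · intro f
        obtain ⟨e, he⟩ := qf f.1 f.2
        refine ⟨⟨⟨LinearMap.ker f.1, ⟨e⟩⟩, (eF ⟨LinearMap.ker f.1, ⟨e⟩⟩).symm.trans e⟩, ?_⟩
        apply Subtype.ext
        apply LinearMap.ext
        intro y
        rw [hΨapp]
        show e ((eF ⟨LinearMap.ker f.1, ⟨e⟩⟩).symm ((eF ⟨LinearMap.ker f.1, ⟨e⟩⟩) _)) = f.1 y
        rw [LinearEquiv.symm_apply_apply, he]
    rw [Nat.card_congr (Equiv.ofBijective Ψ hbij).symm, Nat.card_prod]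
  set r' := Module.finrank (ZMod p) V with hr'def
  have key : Nat.card {F : Submodule R M // Nonempty ((M ⧸ F) ≃ₗ[R] G)} * Nat.card (G ≃ₗ[R] G)
      = Nat.card P ^ n * ∏ i : Fin r', (p ^ n - p ^ (i : ℕ)) := by
    rw [← c1, c2, c3, c4, c5, mul_comm]
  haveI : Finite (G ≃ₗ[R] G) := Finite.of_injective (fun e => (e : G → G)) DFunLike.coe_injective
  haveI : Nonempty (G ≃ₗ[R] G) := ⟨LinearEquiv.refl R G⟩
  have ha : (Nat.card (G ≃ₗ[R] G) : ℚ) ≠ 0 := Nat.cast_ne_zero.2 Nat.card_pos.ne'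
  have hpQ : (p : ℚ) ≠ 0 := Nat.cast_ne_zero.2 hp.pos.ne'
  have hcast : ((∏ i : Fin r', (p ^ n - p ^ (i : ℕ)) : ℕ) : ℚ)
      = ∏ i : Fin r', ((p : ℚ) ^ n - (p : ℚ) ^ (i : ℕ)) := by
    rw [Nat.cast_prod]
    refine Finset.prod_congr rfl fun i _ => ?_
    rw [Nat.cast_sub (Nat.pow_le_pow_right hp.one_lt.le (le_of_lt (lt_of_lt_of_le i.isLt hrn)))]
    push_cast
    ring
  have hprod : ((p : ℚ) ^ r') ^ n * ∏ i ∈ Finset.Icc (n - r' + 1) n, (1 - (p : ℚ) ^ (-(i : ℤ)))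
      = ∏ i : Fin r', ((p : ℚ) ^ n - (p : ℚ) ^ (i : ℕ)) := by
    have hcardIcc : (Finset.Icc (n - r' + 1) n).card = r' := by
      rw [Nat.card_Icc]
      omega
    have h1 : ((p : ℚ) ^ r') ^ n = ∏ _i ∈ Finset.Icc (n - r' + 1) n, (p : ℚ) ^ n := by
      rw [Finset.prod_const, hcardIcc, ← pow_mul, ← pow_mul, mul_comm]
    rw [h1, ← Finset.prod_mul_distrib]
    have h2 : ∀ i ∈ Finset.Icc (n - r' + 1) n,
        (p : ℚ) ^ n * (1 - (p : ℚ) ^ (-(i : ℤ))) = (p : ℚ) ^ n - (p : ℚ) ^ ((n - i : ℕ)) := by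
      intro i hi
      rw [Finset.mem_Icc] at hi
      have h3 : (p : ℚ) ^ n * (p : ℚ) ^ (-(i : ℤ)) = (p : ℚ) ^ ((n - i : ℕ)) := by
        rw [← zpow_natCast (p : ℚ) n, ← zpow_add₀ hpQ, ← zpow_natCast (p : ℚ) (n - i)]
        congr 1
        omega
      rw [mul_sub, mul_one, h3]
    rw [Finset.prod_congr rfl h2, Fin.prod_univ_eq_prod_range (fun i => (p : ℚ) ^ n - (p : ℚ) ^ i) r']
    refine Finset.prod_nbij' (fun i => n - i) (fun j => n - j) ?_ ?_ ?_ ?_ ?_ <;>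
        intro a ha <;>
        simp only [Finset.mem_Icc, Finset.mem_range] at ha ⊢ <;>
      first
        | omega
        | rfl
  have keyQ : (Nat.card {F : Submodule R M // Nonempty ((M ⧸ F) ≃ₗ[R] G)} : ℚ)
      * (Nat.card (G ≃ₗ[R] G) : ℚ)
      = (Nat.card P : ℚ) ^ n * ∏ i : Fin r', ((p : ℚ) ^ n - (p : ℚ) ^ (i : ℕ)) := by
    rw [← hcast]
    exact_mod_cast congrArg (Nat.cast : ℕ → ℚ) key
  have hc6Q : (Nat.card G : ℚ) = (p : ℚ) ^ r' * (Nat.card P : ℚ) := by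
    exact_mod_cast congrArg (Nat.cast : ℕ → ℚ) c6
  rw [div_mul_eq_mul_div, eq_div_iff ha, keyQ, hc6Q, mul_pow, ← hprod]
  ring
end

section
/- Let F be a Z_p-submodule of Z_p^n of finite index. Then the probability that a Haar-random matrix M ∈ Mat_n(Z_p) satisfies im(M) = F equals [Z_p^n : F]^{-n} · ∏_{i=1}^{n} (1 - p^{-i}). -/
open MeasureTheory
open scoped ENNReal


lemma meas_preimage_mk {G : Type*} [AddCommGroup G] [MeasurableSpace G] [MeasurableAdd G]
    (μ : Measure G) [IsProbabilityMeasure μ] [μ.IsAddLeftInvariant]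
    (H : AddSubgroup G) (hH : MeasurableSet (H : Set G)) [Finite (G ⧸ H)]
    (T : Set (G ⧸ H)) :
    μ ((QuotientAddGroup.mk : G → G ⧸ H) ⁻¹' T)
      = Nat.card T * (Nat.card (G ⧸ H) : ℝ≥0∞)⁻¹ := by
  classical
  haveI : Fintype (G ⧸ H) := Fintype.ofFinite _
  have key : ∀ q : G ⧸ H, (QuotientAddGroup.mk : G → G ⧸ H) ⁻¹' {q}
      = (fun g => -q.out + g) ⁻¹' (H : Set G) := by
    intro q
    ext g
    simp only [Set.mem_preimage, Set.mem_singleton_iff, SetLike.mem_coe]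
    set x := q.out with hxdef
    have hx : (QuotientAddGroup.mk x : G ⧸ H) = q := QuotientAddGroup.out_eq' q
    rw [← hx, eq_comm, QuotientAddGroup.eq]
  have meas_q : ∀ q : G ⧸ H, MeasurableSet ((QuotientAddGroup.mk : G → G ⧸ H) ⁻¹' {q}) := by
    intro q; rw [key]; exact hH.preimage (measurable_const_add _)
  have vol_q : ∀ q : G ⧸ H, μ ((QuotientAddGroup.mk : G → G ⧸ H) ⁻¹' {q}) = μ (H : Set G) := by
    intro q; rw [key]; exact measure_preimage_add μ _ _
  have hdisj : ∀ (q q' : G ⧸ H), q ≠ q' →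
      Disjoint ((QuotientAddGroup.mk : G → G ⧸ H) ⁻¹' {q})
        ((QuotientAddGroup.mk : G → G ⧸ H) ⁻¹' {q'}) := by
    intro q q' hqq'
    exact Set.disjoint_left.2 fun g hg hg' => hqq' (hg.symm.trans hg')
  have huniv : (Set.univ : Set G) = ⋃ q : G ⧸ H, (QuotientAddGroup.mk : G → G ⧸ H) ⁻¹' {q} := by
    ext g; simp
  have hone : (1 : ℝ≥0∞) = (Nat.card (G ⧸ H) : ℝ≥0∞) * μ (H : Set G) := by
    have := measure_univ (μ := μ)
    rw [huniv, measure_iUnion (fun q q' h => hdisj q q' h) meas_q] at this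
    rw [← this, tsum_fintype]
    simp [vol_q, Finset.sum_const, Nat.card_eq_fintype_card, nsmul_eq_mul]
  have hcard0 : (Nat.card (G ⧸ H) : ℝ≥0∞) ≠ 0 := by
    simp [Nat.card_eq_fintype_card, Fintype.card_ne_zero]
  have hcardtop : (Nat.card (G ⧸ H) : ℝ≥0∞) ≠ ⊤ := ENNReal.natCast_ne_top _
  have hH' : μ (H : Set G) = (Nat.card (G ⧸ H) : ℝ≥0∞)⁻¹ := by
    rw [← one_mul (_)⁻¹, hone, mul_comm _ (μ _), mul_assoc, ENNReal.mul_inv_cancel hcard0 hcardtop, mul_one]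
  have hT : (QuotientAddGroup.mk : G → G ⧸ H) ⁻¹' T = ⋃ q ∈ T.toFinset, (QuotientAddGroup.mk : G → G ⧸ H) ⁻¹' {q} := by
    ext g; simp
  rw [hT, measure_biUnion_finset (fun q _ q' _ h => hdisj q q' h) (fun q _ => meas_q q)]
  simp only [vol_q, hH', Finset.sum_const, nsmul_eq_mul]
  congr 1
  rw [Nat.card_eq_card_toFinset]

lemma exists_basis_matrix (p : ℕ) [Fact p.Prime] (n : ℕ)
    (F : Submodule ℤ_[p] (Fin n → ℤ_[p])) [Finite ((Fin n → ℤ_[p]) ⧸ F)] :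
    ∃ A : Matrix (Fin n) (Fin n) ℤ_[p],
      Function.Injective A.mulVecLin ∧ LinearMap.range A.mulVecLin = F := by
  classical
  obtain ⟨m, b⟩ := Submodule.basisOfPid (Pi.basisFun ℤ_[p] (Fin n)) F
  -- m ≤ n
  have hmn : m ≤ n := by
    have h1 : LinearIndependent ℤ_[p] (fun i => (b i : Fin n → ℤ_[p])) :=
      b.linearIndependent.map' F.subtype (Submodule.ker_subtype F)
    simpa using Module.Basis.card_le_card_of_linearIndependent (Pi.basisFun ℤ_[p] (Fin n)) h1
  -- n ≤ m
  set c : ℕ := Nat.card ((Fin n → ℤ_[p]) ⧸ F) with hc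
  have hc0 : c ≠ 0 := Nat.card_ne_zero.2 ⟨⟨0⟩, inferInstance⟩
  have hcF : ∀ x : Fin n → ℤ_[p], (c : ℤ_[p]) • x ∈ F := by
    intro x
    rw [← Submodule.Quotient.mk_eq_zero F]
    have : (Submodule.Quotient.mk ((c : ℤ_[p]) • x) : (Fin n → ℤ_[p]) ⧸ F)
        = (c : ℤ_[p]) • (Submodule.Quotient.mk x) := by
      rw [Submodule.Quotient.mk_smul]
    rw [this, Nat.cast_smul_eq_nsmul]
    exact card_nsmul_eq_zero'
  have hnm : n ≤ m := by
    set v : Fin n → F := fun i => ⟨(c : ℤ_[p]) • (Pi.single i 1 : Fin n → ℤ_[p]), hcF _⟩ with hv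
    have hvi : LinearIndependent ℤ_[p] v := by
      have hcomp : LinearIndependent ℤ_[p] (fun i => ((v i : Fin n → ℤ_[p]))) := by
        rw [linearIndependent_iff']
        intro s g hsum i hi
        have : ∀ i ∈ s, g i • ((c : ℤ_[p]) • (Pi.single i 1 : Fin n → ℤ_[p])) = ((c : ℤ_[p]) * g i) • (Pi.single i 1 : Fin n → ℤ_[p]) := by
          intro i _; rw [smul_smul, mul_comm]
        rw [Finset.sum_congr rfl this] at hsum
        have := linearIndependent_iff'.1 (Pi.basisFun ℤ_[p] (Fin n)).linearIndependent
          s (fun i => (c : ℤ_[p]) * g i) (by simpa using hsum) i hi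
        rcases mul_eq_zero.1 this with h | h
        · exact absurd h (by exact_mod_cast (Nat.cast_ne_zero (R := ℤ_[p])).2 hc0)
        · exact h
      exact hcomp.of_comp F.subtype
    simpa using Module.Basis.card_le_card_of_linearIndependent b hvi
  have hm : m = n := le_antisymm hmn hnm
  subst hm
  -- build matrix from basis b
  set A : Matrix (Fin m) (Fin m) ℤ_[p] := Matrix.of (fun i j => (b j : Fin m → ℤ_[p]) i) with hA
  have hAlin0 : ∀ x, A.mulVecLin x = ((∑ j, x j • b j : F) : Fin m → ℤ_[p]) := by
    intro x
    ext i
    rw [Submodule.coe_sum]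
    simp [A, Matrix.mulVecLin_apply, Matrix.mulVec, dotProduct, Finset.sum_apply, mul_comm]
  have hAlin : A.mulVecLin = F.subtype ∘ₗ (b.equivFun.symm : (Fin m → ℤ_[p]) →ₗ[ℤ_[p]] F) := by
    apply LinearMap.ext
    intro x
    rw [hAlin0 x]
    simp [Module.Basis.equivFun_symm_apply]
  refine ⟨A, ?_, ?_⟩
  · rw [hAlin]
    exact (Submodule.injective_subtype F).comp (LinearEquiv.injective _)
  · rw [hAlin, LinearMap.range_comp, LinearEquiv.range, Submodule.map_top, Submodule.range_subtype]

lemma card_eq_of_ker_eq {G H1 H2 : Type*} [AddCommGroup G] [AddCommGroup H1] [AddCommGroup H2]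
    (χ : G →+ H1) (ψ : G →+ H2) (hχ : Function.Surjective χ) (hψ : Function.Surjective ψ)
    (hker : χ.ker = ψ.ker) [Finite H2] : Finite H1 ∧ Nat.card H1 = Nat.card H2 := by
  have e1 := (QuotientAddGroup.quotientKerEquivOfSurjective χ hχ).symm
  have e2 := QuotientAddGroup.quotientKerEquivOfSurjective ψ hψ
  have e3 := QuotientAddGroup.quotientAddEquivOfEq hker
  have e := e1.trans (e3.trans e2)
  exact ⟨Finite.of_equiv _ e.symm.toEquiv, Nat.card_congr e.toEquiv⟩

lemma matrix_quot_equiv (p : ℕ) [Fact p.Prime] (n : ℕ) (B : Matrix (Fin n) (Fin n) ℤ_[p]) :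
    Nonempty ((Matrix (Fin n) (Fin n) ℤ_[p] ⧸ (AddMonoidHom.mulLeft B).range) ≃+
      (Fin n → ((Fin n → ℤ_[p]) ⧸ LinearMap.range B.mulVecLin))) := by
  classical
  set Q := (Fin n → ℤ_[p]) ⧸ LinearMap.range B.mulVecLin
  set φ : Matrix (Fin n) (Fin n) ℤ_[p] →+ (Fin n → Q) :=
    AddMonoidHom.mk' (fun M => fun j => Submodule.Quotient.mk (fun i => M i j)) (by
      intro M N
      funext j
      show (Submodule.Quotient.mk (fun i => (M + N) i j) : Q)
          = Submodule.Quotient.mk (fun i => M i j) + Submodule.Quotient.mk (fun i => N i j)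
      rw [← Submodule.Quotient.mk_add]
      rfl) with hφ
  have hsurj : Function.Surjective φ := by
    intro w
    choose rep hrep using fun j => Submodule.Quotient.mk_surjective _ (w j)
    refine ⟨Matrix.of (fun i j => rep j i), ?_⟩
    funext j
    exact hrep j
  have hker : φ.ker = (AddMonoidHom.mulLeft B).range := by
    ext M
    simp only [AddMonoidHom.mem_ker, AddMonoidHom.mem_range, hφ, AddMonoidHom.mk'_apply,
      funext_iff, Pi.zero_apply, Submodule.Quotient.mk_eq_zero, LinearMap.mem_range]
    constructor
    · intro h
      choose v hv using h
      refine ⟨Matrix.of (fun k j => v j k), ?_⟩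
      ext i j
      have := hv j i
      simpa [Matrix.mul_apply, Matrix.mulVecLin_apply, Matrix.mulVec, dotProduct] using this
    · rintro ⟨N, rfl⟩ j
      refine ⟨fun k => N k j, ?_⟩
      intro i
      simp [Matrix.mulVecLin_apply, Matrix.mulVec, Matrix.mul_apply, dotProduct,
        AddMonoidHom.mulLeft]
  exact ⟨(QuotientAddGroup.quotientAddEquivOfEq hker.symm).trans
    (QuotientAddGroup.quotientKerEquivOfSurjective φ hsurj)⟩

lemma card_quot_pA (p : ℕ) [Fact p.Prime] (n : ℕ)
    (F : Submodule ℤ_[p] (Fin n → ℤ_[p])) [Finite ((Fin n → ℤ_[p]) ⧸ F)]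
    (A : Matrix (Fin n) (Fin n) ℤ_[p]) (hInj : Function.Injective A.mulVecLin)
    (hrange : LinearMap.range A.mulVecLin = F) :
    Finite ((Fin n → ℤ_[p]) ⧸ LinearMap.range ((p : ℤ_[p]) • A).mulVecLin) ∧
    Nat.card ((Fin n → ℤ_[p]) ⧸ LinearMap.range ((p : ℤ_[p]) • A).mulVecLin)
      = p ^ n * Nat.card ((Fin n → ℤ_[p]) ⧸ F) := by
  classical
  set Fp : Submodule ℤ_[p] (Fin n → ℤ_[p]) := LinearMap.range ((p : ℤ_[p]) • A).mulVecLin with hFp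
  have hpA : ∀ v, ((p : ℤ_[p]) • A).mulVecLin v = A.mulVecLin ((p : ℤ_[p]) • v) := by
    intro v
    rw [Matrix.mulVecLin_apply, Matrix.smul_mulVec]
    exact (map_smul A.mulVecLin _ v).symm
  have hle : Fp.toAddSubgroup ≤ F.toAddSubgroup := by
    intro x hx
    obtain ⟨v, hv⟩ := hx
    rw [← hrange]
    exact ⟨(p : ℤ_[p]) • v, by rw [← hpA]; exact hv⟩
  have hcoe : ∀ (x : Fin n → ℤ_[p]) (hx : x ∈ F.toAddSubgroup),
      ((⟨x, hx⟩ : ↥F.toAddSubgroup) : Fin n → ℤ_[p]) = x := fun _ _ => rfl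
  -- the subgroup quotient F / pF has cardinality p^n
  set χ0 : (Fin n → ℤ_[p]) →+ ↥F.toAddSubgroup :=
    AddMonoidHom.mk' (fun x => ⟨A.mulVec x, by
      rw [← hrange]; exact ⟨x, rfl⟩⟩) (by
      intro x y
      apply Subtype.ext
      exact Matrix.mulVec_add A x y) with hχ0
  set χ : (Fin n → ℤ_[p]) →+ (↥F.toAddSubgroup ⧸ (Fp.toAddSubgroup.addSubgroupOf F.toAddSubgroup)) :=
    (QuotientAddGroup.mk' (Fp.toAddSubgroup.addSubgroupOf F.toAddSubgroup)).comp χ0 with hχ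
  have hχsurj : Function.Surjective χ := by
    intro w
    obtain ⟨⟨z, hz⟩, rfl⟩ := QuotientAddGroup.mk_surjective w
    rw [← hrange] at hz
    obtain ⟨x, hx⟩ := hz
    refine ⟨x, ?_⟩
    simp only [hχ, hχ0, AddMonoidHom.coe_comp, Function.comp_apply, QuotientAddGroup.mk'_apply,
      AddMonoidHom.mk'_apply]
    congr 1
    exact Subtype.ext ((Matrix.mulVecLin_apply A x).symm.trans hx)
  set ψ : (Fin n → ℤ_[p]) →+ (Fin n → ZMod p) :=
    AddMonoidHom.mk' (fun x => fun j => PadicInt.toZMod (x j)) (by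
      intro x y; funext j; simp) with hψ
  have hψsurj : Function.Surjective ψ := by
    intro y
    refine ⟨fun j => ((y j).val : ℤ_[p]), ?_⟩
    funext j
    simp only [hψ, AddMonoidHom.mk'_apply, map_natCast]
    exact ZMod.natCast_rightInverse (y j)
  have hdvd : ∀ x : ℤ_[p], PadicInt.toZMod x = 0 ↔ (p : ℤ_[p]) ∣ x := by
    intro x
    constructor
    · intro h
      have : x ∈ RingHom.ker (PadicInt.toZMod : ℤ_[p] →+* ZMod p) := h
      rwa [PadicInt.ker_toZMod, PadicInt.maximalIdeal_eq_span_p, Ideal.mem_span_singleton] at this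
    · intro h
      have : x ∈ RingHom.ker (PadicInt.toZMod : ℤ_[p] →+* ZMod p) := by
        rw [PadicInt.ker_toZMod, PadicInt.maximalIdeal_eq_span_p, Ideal.mem_span_singleton]
        exact h
      exact this
  have hker : χ.ker = ψ.ker := by
    ext x
    simp only [AddMonoidHom.mem_ker, hχ, hχ0, hψ, AddMonoidHom.coe_comp, Function.comp_apply,
      QuotientAddGroup.mk'_apply, AddMonoidHom.mk'_apply, funext_iff, Pi.zero_apply]
    rw [QuotientAddGroup.eq_zero_iff, AddSubgroup.mem_addSubgroupOf]
    constructor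
    · rintro ⟨v, hv⟩ j
      rw [hpA] at hv
      have hv' : A.mulVecLin ((p : ℤ_[p]) • v) = A.mulVecLin x := by
        rw [hv]; exact (show A.mulVec x = A.mulVecLin x from (Matrix.mulVecLin_apply A x).symm)
      have hx : (p : ℤ_[p]) • v = x := hInj hv'
      rw [hdvd]
      exact ⟨v j, by rw [← hx]; simp⟩
    · intro h
      have h' : ∀ j, ∃ y, x j = (p : ℤ_[p]) * y := fun j => (hdvd (x j)).1 (h j)
      choose v hv using h'
      refine ⟨v, ?_⟩
      have hx : (p : ℤ_[p]) • v = x := by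
        funext j
        rw [Pi.smul_apply, smul_eq_mul, hv j]
      rw [hpA, hx]
      exact (show A.mulVecLin x = A.mulVec x from Matrix.mulVecLin_apply A x)
  have hfin : Finite (↥F.toAddSubgroup ⧸ (Fp.toAddSubgroup.addSubgroupOf F.toAddSubgroup)) ∧
      Nat.card (↥F.toAddSubgroup ⧸ (Fp.toAddSubgroup.addSubgroupOf F.toAddSubgroup))
        = Nat.card (Fin n → ZMod p) :=
    card_eq_of_ker_eq χ ψ hχsurj hψsurj hker
  have hcardZ : Nat.card (Fin n → ZMod p) = p ^ n := by
    simp [Nat.card_pi, Nat.card_eq_fintype_card, ZMod.card]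
  have hrel : Fp.toAddSubgroup.relIndex F.toAddSubgroup = p ^ n := by
    rw [← hcardZ, ← hfin.2]
    rfl
  have hFidx : F.toAddSubgroup.index = Nat.card ((Fin n → ℤ_[p]) ⧸ F) := rfl
  have hmul := AddSubgroup.relIndex_mul_index hle
  rw [hrel, hFidx] at hmul
  have hFpidx : Nat.card ((Fin n → ℤ_[p]) ⧸ Fp) = Fp.toAddSubgroup.index := rfl
  have hidx0 : Fp.toAddSubgroup.index ≠ 0 := by
    rw [← hmul]
    have h0 : Nat.card ((Fin n → ℤ_[p]) ⧸ F) ≠ 0 := Nat.card_ne_zero.2 ⟨⟨0⟩, inferInstance⟩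
    exact mul_ne_zero (pow_ne_zero _ (Nat.Prime.ne_zero Fact.out)) h0
  haveI : Fp.toAddSubgroup.FiniteIndex := ⟨hidx0⟩
  refine ⟨?_, by rw [hFpidx, ← hmul]⟩
  have : Finite ((Fin n → ℤ_[p]) ⧸ Fp.toAddSubgroup) :=
    Fp.toAddSubgroup.finite_quotient_of_finiteIndex
  exact this

lemma padic_isUnit_iff_toZMod (p : ℕ) [Fact p.Prime] (x : ℤ_[p]) :
    IsUnit x ↔ PadicInt.toZMod x ≠ 0 := by
  have hmem : PadicInt.toZMod x = 0 ↔ (p : ℤ_[p]) ∣ x := by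
    constructor
    · intro h
      have : x ∈ RingHom.ker (PadicInt.toZMod : ℤ_[p] →+* ZMod p) := h
      rwa [PadicInt.ker_toZMod, PadicInt.maximalIdeal_eq_span_p, Ideal.mem_span_singleton] at this
    · intro h
      have : x ∈ RingHom.ker (PadicInt.toZMod : ℤ_[p] →+* ZMod p) := by
        rw [PadicInt.ker_toZMod, PadicInt.maximalIdeal_eq_span_p, Ideal.mem_span_singleton]
        exact h
      exact this
  have hlt : ‖x‖ < 1 ↔ PadicInt.toZMod x = 0 := by
    rw [hmem, ← PadicInt.norm_lt_one_iff_dvd]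
  rw [PadicInt.isUnit_iff]
  constructor
  · intro h h0
    have := hlt.2 h0
    rw [h] at this
    exact lt_irrefl _ this
  · intro h
    rcases lt_or_eq_of_le (PadicInt.norm_le_one x) with h1 | h1
    · exact absurd (hlt.1 h1) h
    · exact h1

lemma surjective_iff_unit_mod (p : ℕ) [Fact p.Prime] (n : ℕ)
    (N : Matrix (Fin n) (Fin n) ℤ_[p]) :
    Function.Surjective N.mulVecLin ↔
      IsUnit ((PadicInt.toZMod : ℤ_[p] →+* ZMod p).mapMatrix N) := by
  classical
  have h1 : Function.Surjective N.mulVecLin ↔ Function.Surjective N.mulVec := Iff.rfl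
  rw [h1, Matrix.mulVec_surjective_iff_isUnit, Matrix.isUnit_iff_isUnit_det,
    Matrix.isUnit_iff_isUnit_det, padic_isUnit_iff_toZMod, RingHom.map_det, isUnit_iff_ne_zero]

lemma final_arith_s4 (p n c : ℕ) (hp : 1 < p) (hc : c ≠ 0) :
    ((∏ i : Fin n, (p ^ n - p ^ (i : ℕ)) : ℕ) : ℝ≥0∞) * (((p ^ n * c) ^ n : ℕ) : ℝ≥0∞)⁻¹
      = ENNReal.ofReal (((c : ℝ) ^ n)⁻¹ * ∏ i ∈ Finset.Icc 1 n, (1 - (p : ℝ) ^ (-(i : ℤ)))) := by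
  have hp0 : (0:ℝ) < p := by positivity
  have hb : (0:ℕ) < (p ^ n * c) ^ n := by positivity
  have hreal : ((∏ i : Fin n, (p ^ n - p ^ (i : ℕ)) : ℕ) : ℝ) / (((p ^ n * c) ^ n : ℕ) : ℝ)
      = ((c : ℝ) ^ n)⁻¹ * ∏ i ∈ Finset.Icc 1 n, (1 - (p : ℝ) ^ (-(i : ℤ))) := by
    have cast_each : ∀ i : Fin n, ((p ^ n - p ^ (i : ℕ) : ℕ) : ℝ) = (p:ℝ)^n - (p:ℝ)^(i:ℕ) := by
      intro i
      have hle : p ^ (i:ℕ) ≤ p ^ n := Nat.pow_le_pow_right (le_of_lt hp) (le_of_lt i.isLt)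
      rw [Nat.cast_sub hle]
      push_cast
      ring
    have hnum : ((∏ i : Fin n, (p ^ n - p ^ (i : ℕ)) : ℕ) : ℝ)
        = (p : ℝ) ^ (n * n) * ∏ i ∈ Finset.Icc 1 n, (1 - (p : ℝ) ^ (-(i : ℤ))) := by
      rw [Nat.cast_prod, Finset.prod_congr rfl (fun i _ => cast_each i)]
      have step : ∀ i ∈ Finset.range n, ((p:ℝ) ^ n - (p:ℝ) ^ i)
          = (p:ℝ) ^ n * (1 - (p : ℝ) ^ (-((n - i : ℕ) : ℤ))) := by
        intro i hi
        have hin : i < n := Finset.mem_range.1 hi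
        have hpow : (p:ℝ)^i = (p:ℝ)^n * ((p:ℝ)^(n-i))⁻¹ := by
          rw [← pow_sub₀ _ (ne_of_gt hp0) (Nat.sub_le n i)]
          congr 1
          omega
        rw [zpow_neg, zpow_natCast, mul_sub, mul_one, ← hpow]
      rw [Fin.prod_univ_eq_prod_range (fun i => (p:ℝ)^n - (p:ℝ)^i), Finset.prod_congr rfl step,
        Finset.prod_mul_distrib, Finset.prod_const, Finset.card_range, ← pow_mul]
      congr 1
      refine Finset.prod_bij' (fun i _ => n - i) (fun j _ => n - j) ?_ ?_ ?_ ?_ ?_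
      · intro i hi
        simp only [Finset.mem_range] at hi
        simp only [Finset.mem_Icc]
        omega
      · intro j hj
        simp only [Finset.mem_Icc] at hj
        simp only [Finset.mem_range]
        omega
      · intro i hi
        simp only [Finset.mem_range] at hi
        show n - (n - i) = i
        omega
      · intro j hj
        simp only [Finset.mem_Icc] at hj
        show n - (n - j) = j
        omega
      · intro i hi
        rfl
    have hden : (((p ^ n * c) ^ n : ℕ) : ℝ) = (p : ℝ) ^ (n * n) * (c : ℝ) ^ n := by
      push_cast
      rw [mul_pow, ← pow_mul]
    rw [hnum, hden, mul_div_mul_left _ _ (ne_of_gt (by positivity : (0:ℝ) < (p:ℝ)^(n*n))),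
      div_eq_mul_inv, mul_comm]
  rw [← hreal, ENNReal.ofReal_div_of_pos (by exact_mod_cast hb), ENNReal.ofReal_natCast,
    ENNReal.ofReal_natCast, div_eq_mul_inv]

/-- For the Haar probability measure on `Mat_n(ℤ_p)` and a finite-index submodule
`F ⊆ ℤ_p^n`, the probability that a random matrix has image exactly `F`
equals `[ℤ_p^n : F]^{-n} · ∏_{i=1}^{n} (1 - p^{-i})`. -/
theorem prob_image_eq_submodule
    (p : ℕ) [Fact p.Prime] (n : ℕ)
    [MeasurableSpace (Matrix (Fin n) (Fin n) ℤ_[p])]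
    [BorelSpace (Matrix (Fin n) (Fin n) ℤ_[p])]
    (μ : Measure (Matrix (Fin n) (Fin n) ℤ_[p]))
    [μ.IsAddHaarMeasure] [IsProbabilityMeasure μ]
    (F : Submodule ℤ_[p] (Fin n → ℤ_[p])) [Finite ((Fin n → ℤ_[p]) ⧸ F)] :
    μ {M | LinearMap.range (Matrix.mulVecLin M) = F}
      = ENNReal.ofReal (((Nat.card ((Fin n → ℤ_[p]) ⧸ F) : ℝ) ^ n)⁻¹ *
          ∏ i ∈ Finset.Icc 1 n, (1 - (p : ℝ) ^ (-(i : ℤ)))) := by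
  classical
  obtain ⟨A, hInj, hrange⟩ := exists_basis_matrix p n F
  set π : Matrix (Fin n) (Fin n) ℤ_[p] →+* Matrix (Fin n) (Fin n) (ZMod p) :=
    (PadicInt.toZMod : ℤ_[p] →+* ZMod p).mapMatrix with hπ
  set K : AddSubgroup (Matrix (Fin n) (Fin n) ℤ_[p]) :=
    (AddMonoidHom.mulLeft ((p : ℤ_[p]) • A)).range with hK
  set S : Set (Matrix (Fin n) (Fin n) ℤ_[p]) :=
    {M | LinearMap.range (Matrix.mulVecLin M) = F} with hS
  set c : ℕ := Nat.card ((Fin n → ℤ_[p]) ⧸ F) with hc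
  have hπapp : ∀ (X : Matrix (Fin n) (Fin n) ℤ_[p]) i j,
      π X i j = PadicInt.toZMod (X i j) := by
    intro X i j; rfl
  have hcancel : ∀ X Y : Matrix (Fin n) (Fin n) ℤ_[p], A * X = A * Y → X = Y := by
    intro X Y h
    have hcol : ∀ j, (fun k => X k j) = (fun k => Y k j) := by
      intro j
      apply hInj
      funext i
      show (A.mulVec fun k => X k j) i = (A.mulVec fun k => Y k j) i
      have := congrFun (congrFun h i) j
      simpa [Matrix.mul_apply, Matrix.mulVec, dotProduct] using this
    ext i j
    exact congrFun (hcol j) i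
  have hmemK : ∀ X, X ∈ K ↔ ∃ N₀, ((p : ℤ_[p]) • A) * N₀ = X := by
    intro X
    simp [hK, AddMonoidHom.mem_range, AddMonoidHom.mulLeft]
  have hsmulmul : ∀ N₀ : Matrix (Fin n) (Fin n) ℤ_[p],
      ((p : ℤ_[p]) • A) * N₀ = A * ((p : ℤ_[p]) • N₀) := by
    intro N₀
    rw [Matrix.smul_mul, Matrix.mul_smul]
  have hπp : ∀ N₀ : Matrix (Fin n) (Fin n) ℤ_[p], π ((p : ℤ_[p]) • N₀) = 0 := by
    intro N₀
    ext i j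
    rw [hπapp]
    show PadicInt.toZMod ((p : ℤ_[p]) * N₀ i j) = (0 : Matrix (Fin n) (Fin n) (ZMod p)) i j
    rw [map_mul, map_natCast, ZMod.natCast_self, zero_mul]
    rfl
  have hmem_iff : ∀ M, M ∈ S ↔ ∃ N, M = A * N ∧ IsUnit (π N) := by
    intro M
    constructor
    · intro hM
      have hM' : LinearMap.range (Matrix.mulVecLin M) = F := hM
      have hcol' : ∀ j, ∃ x, A.mulVecLin x = (fun i => M i j) := by
        intro j
        have h1 : (fun i => M i j) ∈ F := by
          rw [← hM']
          refine ⟨Pi.single j 1, ?_⟩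
          funext i
          show (M.mulVec (Pi.single j 1)) i = M i j
          rw [Matrix.mulVec_single]
          exact mul_one _
        rw [← hrange] at h1
        exact h1
      choose v hv using hcol'
      set N : Matrix (Fin n) (Fin n) ℤ_[p] := Matrix.of (fun k j => v j k) with hN
      have hMN : M = A * N := by
        ext i j
        have := congrFun (hv j) i
        simpa [Matrix.mulVecLin_apply, Matrix.mulVec, dotProduct, Matrix.mul_apply,
          hN] using this.symm
      refine ⟨N, hMN, ?_⟩
      rw [← surjective_iff_unit_mod]
      have hcomp : Submodule.map A.mulVecLin (LinearMap.range N.mulVecLin)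
          = Submodule.map A.mulVecLin ⊤ := by
        rw [← LinearMap.range_comp, ← Matrix.mulVecLin_mul, ← hMN, Submodule.map_top, hrange]
        exact hM'
      have := Submodule.map_injective_of_injective hInj hcomp
      rw [← LinearMap.range_eq_top]
      exact this
    · rintro ⟨N, rfl, hu⟩
      rw [← surjective_iff_unit_mod] at hu
      show LinearMap.range (A * N).mulVecLin = F
      rw [Matrix.mulVecLin_mul, LinearMap.range_comp, LinearMap.range_eq_top.2 hu,
        Submodule.map_top, hrange]
  haveI : CompactSpace (Matrix (Fin n) (Fin n) ℤ_[p]) :=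
    (inferInstance : CompactSpace (Fin n → Fin n → ℤ_[p]))
  have hKmeas : MeasurableSet (K : Set (Matrix (Fin n) (Fin n) ℤ_[p])) := by
    have himg : (K : Set (Matrix (Fin n) (Fin n) ℤ_[p]))
        = (fun N => ((p : ℤ_[p]) • A) * N) '' Set.univ := by
      ext X
      simp only [Set.image_univ, Set.mem_range, SetLike.mem_coe]
      exact hmemK X
    rw [himg]
    exact ((isCompact_univ.image
      (Continuous.matrix_mul continuous_const continuous_id)).isClosed).measurableSet
  obtain ⟨hfin1, hcard1⟩ := card_quot_pA p n F A hInj hrange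
  obtain ⟨e⟩ := matrix_quot_equiv p n ((p : ℤ_[p]) • A)
  haveI := hfin1
  haveI : Finite (Matrix (Fin n) (Fin n) ℤ_[p] ⧸ K) := Finite.of_equiv _ e.symm.toEquiv
  have hcardK : Nat.card (Matrix (Fin n) (Fin n) ℤ_[p] ⧸ K) = (p ^ n * c) ^ n := by
    rw [Nat.card_congr e.toEquiv, Nat.card_pi]
    simp only [hcard1, hc, Finset.prod_const, Finset.card_univ, Fintype.card_fin]
  -- S is a union of cosets of K
  have hpre : S = (QuotientAddGroup.mk : _ → Matrix (Fin n) (Fin n) ℤ_[p] ⧸ K) ⁻¹'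
      ((QuotientAddGroup.mk : _ → Matrix (Fin n) (Fin n) ℤ_[p] ⧸ K) '' S) := by
    apply Set.Subset.antisymm (Set.subset_preimage_image _ _)
    rintro M' ⟨M, hMS, hmk⟩
    obtain ⟨N, rfl, hu⟩ := (hmem_iff M).1 hMS
    have hdiff : -(A * N) + M' ∈ K := (QuotientAddGroup.eq).1 hmk
    obtain ⟨N₀, hN₀⟩ := (hmemK _).1 hdiff
    have hM' : M' = A * (N + (p : ℤ_[p]) • N₀) := by
      have : M' = A * N + ((p : ℤ_[p]) • A) * N₀ := by
        rw [hN₀]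
        abel
      rw [this, hsmulmul, ← Matrix.mul_add]
    refine (hmem_iff M').2 ⟨N + (p : ℤ_[p]) • N₀, hM', ?_⟩
    rw [map_add, hπp, add_zero]
    exact hu
  -- the lift of matrices over ZMod p
  set Lf : Matrix (Fin n) (Fin n) (ZMod p) → Matrix (Fin n) (Fin n) ℤ_[p] :=
    fun B => Matrix.of (fun i j => (((B i j).val : ℕ) : ℤ_[p])) with hLf
  have hπL : ∀ B, π (Lf B) = B := by
    intro B
    ext i j
    rw [hπapp]
    show PadicInt.toZMod (((B i j).val : ℕ) : ℤ_[p]) = B i j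
    rw [map_natCast]
    exact ZMod.natCast_rightInverse (B i j)
  -- bijection between GL_n(F_p) and the cosets in S
  have htoZMod_dvd : ∀ x : ℤ_[p], PadicInt.toZMod x = 0 ↔ (p : ℤ_[p]) ∣ x := by
    intro x
    constructor
    · intro h
      have : x ∈ RingHom.ker (PadicInt.toZMod : ℤ_[p] →+* ZMod p) := h
      rwa [PadicInt.ker_toZMod, PadicInt.maximalIdeal_eq_span_p, Ideal.mem_span_singleton] at this
    · intro h
      have : x ∈ RingHom.ker (PadicInt.toZMod : ℤ_[p] →+* ZMod p) := by
        rw [PadicInt.ker_toZMod, PadicInt.maximalIdeal_eq_span_p, Ideal.mem_span_singleton]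
        exact h
      exact this
  have hπ_zero_memK : ∀ X : Matrix (Fin n) (Fin n) ℤ_[p], π X = 0 → A * X ∈ K := by
    intro X hX
    have hdvd : ∀ i j, ∃ y, X i j = (p : ℤ_[p]) * y := by
      intro i j
      have : PadicInt.toZMod (X i j) = 0 := by
        rw [← hπapp, hX]
        rfl
      exact (htoZMod_dvd _).1 this
    choose Y hY using fun i => fun j => hdvd i j
    have hXY : X = (p : ℤ_[p]) • Matrix.of Y := by
      ext i j
      rw [hY i j]
      rfl
    refine (hmemK _).2 ⟨Matrix.of Y, ?_⟩
    rw [hsmulmul, ← hXY]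
  set g : GL (Fin n) (ZMod p) → (Matrix (Fin n) (Fin n) ℤ_[p] ⧸ K) :=
    fun u => QuotientAddGroup.mk (A * Lf ↑u) with hg
  have hgS : ∀ u, g u ∈ (QuotientAddGroup.mk : _ → Matrix (Fin n) (Fin n) ℤ_[p] ⧸ K) '' S := by
    intro u
    exact ⟨A * Lf ↑u, (hmem_iff _).2 ⟨Lf ↑u, rfl, by rw [hπL]; exact u.isUnit⟩, rfl⟩
  set g' : GL (Fin n) (ZMod p) →
      ((QuotientAddGroup.mk : _ → Matrix (Fin n) (Fin n) ℤ_[p] ⧸ K) '' S) :=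
    fun u => ⟨g u, hgS u⟩ with hg'
  have hg'bij : Function.Bijective g' := by
    constructor
    · intro u u' huu'
      have h1 : (QuotientAddGroup.mk (A * Lf ↑u) : Matrix (Fin n) (Fin n) ℤ_[p] ⧸ K)
          = QuotientAddGroup.mk (A * Lf ↑u') := congrArg Subtype.val huu'
      have h2 : -(A * Lf ↑u) + A * Lf ↑u' ∈ K := (QuotientAddGroup.eq).1 h1
      have h3 : A * (Lf ↑u' - Lf ↑u) ∈ K := by
        have : A * (Lf ↑u' - Lf ↑u) = -(A * Lf ↑u) + A * Lf ↑u' := by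
          rw [Matrix.mul_sub]
          abel
        rw [this]
        exact h2
      obtain ⟨N₀, hN₀⟩ := (hmemK _).1 h3
      rw [hsmulmul] at hN₀
      have h4 : (p : ℤ_[p]) • N₀ = Lf ↑u' - Lf ↑u := hcancel _ _ hN₀
      have h5 : (0 : Matrix (Fin n) (Fin n) (ZMod p)) = ↑u' - ↑u := by
        calc (0 : Matrix (Fin n) (Fin n) (ZMod p)) = π ((p : ℤ_[p]) • N₀) := (hπp N₀).symm
        _ = π (Lf ↑u' - Lf ↑u) := by rw [h4]
        _ = ↑u' - ↑u := by rw [map_sub, hπL, hπL]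
      have h6 : (↑u : Matrix (Fin n) (Fin n) (ZMod p)) = ↑u' := by
        have := congrArg (fun X => X + (↑u : Matrix (Fin n) (Fin n) (ZMod p))) h5
        simpa using this
      exact Units.ext h6
    · rintro ⟨w, ⟨M, hMS, rfl⟩⟩
      obtain ⟨N, rfl, hu⟩ := (hmem_iff M).1 hMS
      refine ⟨hu.unit, ?_⟩
      apply Subtype.ext
      show (QuotientAddGroup.mk (A * Lf ↑hu.unit) : Matrix (Fin n) (Fin n) ℤ_[p] ⧸ K)
        = QuotientAddGroup.mk (A * N)
      rw [QuotientAddGroup.eq]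
      have : -(A * Lf ↑hu.unit) + A * N = A * (N - Lf ↑hu.unit) := by
        rw [Matrix.mul_sub]
        abel
      rw [this]
      apply hπ_zero_memK
      rw [map_sub, hπL, IsUnit.unit_spec, sub_self]
  have hcardS : Nat.card
      ((QuotientAddGroup.mk : _ → Matrix (Fin n) (Fin n) ℤ_[p] ⧸ K) '' S)
      = Nat.card (GL (Fin n) (ZMod p)) :=
    (Nat.card_eq_of_bijective g' hg'bij).symm
  -- compute the measure
  show μ S = _
  rw [hpre, meas_preimage_mk μ K hKmeas _, hcardS, hcardK, Matrix.card_GL_field]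
  have hq : Fintype.card (ZMod p) = p := ZMod.card p
  rw [hq]
  have hp1 : 1 < p := (Fact.out : p.Prime).one_lt
  have hc0 : c ≠ 0 := Nat.card_ne_zero.2 ⟨⟨0⟩, inferInstance⟩
  have := final_arith_s4 p n c hp1 hc0
  rw [Nat.cast_prod] at this ⊢
  exact this
end

section
/- Let A, B, C be free Z_p-modules of finite ranks a, b, c respectively, and let f : B → A be a surjective Z_p-linear map. Then for a Haar-random Z_p-linear map g : C → B, the probability that f ∘ g is surjective equals ∏_{i=c-a+1}^{c} (1 - p^{-i}). -/
open MeasureTheory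

namespace ProbCompAux

variable {p : ℕ} [Fact p.Prime]

lemma toZMod_surj : Function.Surjective (PadicInt.toZMod (p := p)) := fun u =>
  ⟨((ZMod.val u : ℕ) : ℤ_[p]), by rw [map_natCast, ZMod.natCast_val, ZMod.cast_id]⟩

lemma toZMod_eq_of_dist_lt {x y : ℤ_[p]} (h : ‖x - y‖ < 1) :
    PadicInt.toZMod x = PadicInt.toZMod y := by
  have hm : x - y ∈ RingHom.ker (PadicInt.toZMod (p := p)) := by
    rw [PadicInt.ker_toZMod, PadicInt.maximalIdeal_eq_span_p, Ideal.mem_span_singleton,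
      ← PadicInt.norm_lt_one_iff_dvd]
    exact h
  have h0 : PadicInt.toZMod (x - y) = 0 := hm
  rw [map_sub] at h0
  exact sub_eq_zero.mp h0

lemma isOpen_toZMod_fiber (u : ZMod p) : IsOpen {x : ℤ_[p] | PadicInt.toZMod x = u} := by
  rw [Metric.isOpen_iff]
  intro x hx
  exact ⟨1, one_pos, fun y hy => by
    rw [Set.mem_setOf_eq, toZMod_eq_of_dist_lt (x := y) (y := x) (by simpa [dist_eq_norm] using hy)]
    exact hx⟩

open Matrix in
lemma surj_iff_red_surj {a c : ℕ} (A : Matrix (Fin a) (Fin c) ℤ_[p]) :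
    Function.Surjective A.mulVecLin ↔
      Function.Surjective (A.map (PadicInt.toZMod (p := p))).mulVecLin := by
  constructor
  · intro h y
    choose lift hlift using toZMod_surj (p := p)
    obtain ⟨x, hx⟩ := h (fun i => lift (y i))
    refine ⟨fun j => PadicInt.toZMod (x j), funext fun i => ?_⟩
    have h2 := (RingHom.map_mulVec (PadicInt.toZMod (p := p)) A x i).symm
    simp only [mulVecLin_apply] at hx ⊢
    calc (A.map PadicInt.toZMod *ᵥ fun j => PadicInt.toZMod (x j)) i
        = (A.map PadicInt.toZMod *ᵥ (PadicInt.toZMod ∘ x)) i := rfl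
      _ = PadicInt.toZMod ((A *ᵥ x) i) := h2
      _ = y i := by rw [hx]; exact hlift (y i)
  · intro h
    rw [← LinearMap.range_eq_top]
    set N := LinearMap.range A.mulVecLin with hN
    have hle : (⊤ : Submodule ℤ_[p] (Fin a → ℤ_[p])) ≤
        N ⊔ (IsLocalRing.maximalIdeal ℤ_[p]) • (⊤ : Submodule ℤ_[p] (Fin a → ℤ_[p])) := by
      intro y _
      obtain ⟨z, hz⟩ := h (fun i => PadicInt.toZMod (y i))
      choose x hx using fun j => toZMod_surj (p := p) (z j)
      have key : ∀ i, PadicInt.toZMod ((A *ᵥ x) i) = PadicInt.toZMod (y i) := by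
        intro i
        have h2 := RingHom.map_mulVec (PadicInt.toZMod (p := p)) A x i
        rw [h2]
        have : (PadicInt.toZMod ∘ x) = z := funext hx
        rw [this]
        exact congrFun hz i
      have hmem : ∀ i, y i - (A *ᵥ x) i ∈ IsLocalRing.maximalIdeal ℤ_[p] := by
        intro i
        rw [← PadicInt.ker_toZMod]
        show PadicInt.toZMod (y i - (A *ᵥ x) i) = 0
        rw [map_sub, key i, sub_self]
      have hsm : y - A *ᵥ x ∈ (IsLocalRing.maximalIdeal ℤ_[p]) •
          (⊤ : Submodule ℤ_[p] (Fin a → ℤ_[p])) := by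
        rw [PadicInt.maximalIdeal_eq_span_p] at hmem ⊢
        choose w hw using fun i => Ideal.mem_span_singleton.mp (hmem i)
        have hworks : y - A *ᵥ x = (p : ℤ_[p]) • w := by
          funext i
          simp only [Pi.sub_apply, Pi.smul_apply, smul_eq_mul]
          exact hw i
        rw [hworks]
        exact Submodule.smul_mem_smul (Ideal.mem_span_singleton_self _) trivial
      have hy : y = A.mulVecLin x + (y - A *ᵥ x) := by simp [mulVecLin_apply]
      rw [hy]
      exact Submodule.add_mem _ (Submodule.mem_sup_left (LinearMap.mem_range_self _ _))
        (Submodule.mem_sup_right hsm)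
    have hfg : (⊤ : Submodule ℤ_[p] (Fin a → ℤ_[p])).FG := Module.Finite.fg_top
    have hIjac : (IsLocalRing.maximalIdeal ℤ_[p]) ≤ Ideal.jacobson ⊥ := by
      rw [IsLocalRing.jacobson_eq_maximalIdeal ⊥ bot_ne_top]
    have := Submodule.sup_eq_sup_smul_of_le_smul_of_le_jacobson
      (I := IsLocalRing.maximalIdeal ℤ_[p]) (J := ⊥) (N := N)
      (N' := (⊤ : Submodule ℤ_[p] (Fin a → ℤ_[p]))) hfg hIjac hle
    simp only [Submodule.bot_smul, sup_bot_eq, sup_top_eq] at this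
    exact this.symm

variable {b c : ℕ}

noncomputable def red (g : Matrix (Fin b) (Fin c) ℤ_[p]) : Matrix (Fin b) (Fin c) (ZMod p) :=
  g.map (PadicInt.toZMod (p := p))

lemma isOpen_red_fiber (y : Matrix (Fin b) (Fin c) (ZMod p)) :
    IsOpen {g : Matrix (Fin b) (Fin c) ℤ_[p] | red g = y} := by
  have : {g : Matrix (Fin b) (Fin c) ℤ_[p] | red g = y}
      = ⋂ i, ⋂ j, (fun g : Matrix (Fin b) (Fin c) ℤ_[p] => g i j) ⁻¹'
          {x : ℤ_[p] | PadicInt.toZMod x = y i j} := by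
    ext g
    simp only [Set.mem_setOf_eq, Set.mem_iInter, Set.mem_preimage]
    constructor
    · intro h i j; rw [← h]; rfl
    · intro h; ext i j; exact h i j
  rw [this]
  exact isOpen_iInter_of_finite fun i => isOpen_iInter_of_finite fun j =>
    (isOpen_toZMod_fiber _).preimage ((continuous_apply j).comp (continuous_apply i))

lemma red_surj : Function.Surjective (red (p := p) (b := b) (c := c)) := by
  intro y
  choose lift hlift using toZMod_surj (p := p)
  exact ⟨Matrix.of fun i j => lift (y i j), by ext i j; exact hlift (y i j)⟩

variable [MeasurableSpace (Matrix (Fin b) (Fin c) ℤ_[p])]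
  [BorelSpace (Matrix (Fin b) (Fin c) ℤ_[p])]
  (μ : Measure (Matrix (Fin b) (Fin c) ℤ_[p]))
  [μ.IsAddHaarMeasure] [IsProbabilityMeasure μ]

set_option linter.unusedSectionVars false

lemma meas_red_fiber (y : Matrix (Fin b) (Fin c) (ZMod p)) :
    μ {g | red g = y} = μ {g | red g = 0} := by
  obtain ⟨g₀, hg₀⟩ := red_surj (p := p) (b := b) (c := c) y
  have key : (fun h => g₀ + h) ⁻¹' {g | red g = y} = {g | red g = 0} := by
    ext h
    simp only [Set.mem_preimage, Set.mem_setOf_eq]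
    have : red (g₀ + h) = red g₀ + red h := by
      ext i j; exact map_add (PadicInt.toZMod (p := p)) _ _
    rw [this, hg₀]
    constructor
    · intro hh; have := congrArg (fun z => z - y) hh; simpa using this
    · intro hh; rw [hh, add_zero]
  rw [← key, measure_preimage_add]

lemma meas_red_preimage (T : Set (Matrix (Fin b) (Fin c) (ZMod p))) :
    μ (red ⁻¹' T) = (Nat.card T : ENNReal) / (Fintype.card (Matrix (Fin b) (Fin c) (ZMod p))) := by
  classical
  have hdisj : ∀ (s : Finset (Matrix (Fin b) (Fin c) (ZMod p))),
      μ (red ⁻¹' (s : Set (Matrix (Fin b) (Fin c) (ZMod p))))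
        = s.card * μ {g | red g = 0} := by
    intro s
    have hsplit : red ⁻¹' (s : Set (Matrix (Fin b) (Fin c) (ZMod p)))
        = ⋃ y ∈ s, {g | red g = y} := by
      ext g; simp [Set.mem_preimage]
    have hd : (s : Set (Matrix (Fin b) (Fin c) (ZMod p))).PairwiseDisjoint
        (fun y => {g : Matrix (Fin b) (Fin c) ℤ_[p] | red g = y}) := by
      intro x hx y hy hxy
      simp only [Function.onFun, Set.disjoint_left]
      intro g hg hg'
      exact hxy (hg ▸ hg')
    have hm : ∀ y ∈ s, MeasurableSet {g : Matrix (Fin b) (Fin c) ℤ_[p] | red g = y} :=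
      fun y _ => (isOpen_red_fiber y).measurableSet
    rw [hsplit, measure_biUnion_finset hd hm]
    simp only [meas_red_fiber μ, Finset.sum_const, nsmul_eq_mul]
  have huniv := hdisj Finset.univ
  rw [Finset.coe_univ, Set.preimage_univ, measure_univ, Finset.card_univ] at huniv
  set N : ENNReal := (Fintype.card (Matrix (Fin b) (Fin c) (ZMod p)) : ENNReal) with hNdef
  have hN0 : N ≠ 0 := by simp [hNdef, Fintype.card_pos.ne']
  have hNtop : N ≠ ⊤ := by simp [hNdef]
  have hμ0 : μ {g | red g = 0} = 1 / N := by
    rw [ENNReal.eq_div_iff hN0 hNtop, ← huniv]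
  have := hdisj T.toFinset
  rw [Set.coe_toFinset] at this
  rw [this, hμ0, Set.toFinset_card, ← Nat.card_eq_fintype_card]
  rw [ENNReal.div_eq_inv_mul, ENNReal.div_eq_inv_mul, mul_one, mul_comm]

open Matrix in
lemma surj_iff_li {K : Type*} [Field K] {a c : ℕ} (h : Matrix (Fin a) (Fin c) K) :
    Function.Surjective h.mulVecLin ↔ LinearIndependent K (fun i => h i) := by
  rw [linearIndependent_iff_card_eq_finrank_span]
  have hrow : h.rank = Set.finrank K (Set.range fun i => h i) :=
    Matrix.rank_eq_finrank_span_row h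
  constructor
  · intro hs
    have hr : h.rank = a := by
      rw [Matrix.rank, LinearMap.range_eq_top.mpr hs, finrank_top, Module.finrank_pi]
      simp
    rw [Fintype.card_fin, ← hrow, hr]
  · intro hli
    have hr : h.rank = a := by
      rw [hrow, ← hli, Fintype.card_fin]
    rw [← LinearMap.range_eq_top]
    have hfr : Module.finrank K (LinearMap.range h.mulVecLin) = a := hr
    apply Submodule.eq_top_of_finrank_eq
    rw [hfr, Module.finrank_pi]
    simp

lemma card_surj_matrices (K : Type*) [Field K] [Fintype K] (a c : ℕ) (hac : a ≤ c) :
    Nat.card {h : Matrix (Fin a) (Fin c) K // Function.Surjective h.mulVecLin}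
      = ∏ i : Fin a, (Fintype.card K ^ c - Fintype.card K ^ (i : ℕ)) := by
  have e : {h : Matrix (Fin a) (Fin c) K // Function.Surjective h.mulVecLin}
      ≃ {s : Fin a → (Fin c → K) // LinearIndependent K s} :=
    Equiv.subtypeEquiv (Equiv.refl _) (fun h => surj_iff_li h)
  rw [Nat.card_congr e]
  have hfr : Module.finrank K (Fin c → K) = c := by rw [Module.finrank_pi]; simp
  rw [card_linearIndependent (K := K) (V := Fin c → K) (by rw [hfr]; exact hac)]
  simp [hfr]

lemma card_surj_matrices_zero (K : Type*) [Field K] [Fintype K] (a c : ℕ) (hac : c < a) :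
    Nat.card {h : Matrix (Fin a) (Fin c) K // Function.Surjective h.mulVecLin} = 0 := by
  rw [Nat.card_eq_zero]
  left
  rw [isEmpty_subtype]
  intro h hs
  have := (surj_iff_li h).mp hs
  have hle := this.fintype_card_le_finrank
  rw [Fintype.card_fin, Module.finrank_pi] at hle
  simp at hle
  omega

def preimageEquiv {R : Type*} [CommRing R] {a b c : ℕ}
    (Mb : Matrix (Fin a) (Fin b) R) (Nb : Matrix (Fin b) (Fin a) R) (hMN : Mb * Nb = 1)
    (S : Set (Matrix (Fin a) (Fin c) R)) :
    ((fun h : Matrix (Fin b) (Fin c) R => Mb * h) ⁻¹' S)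
      ≃ S × {h : Matrix (Fin b) (Fin c) R // Mb * h = 0} where
  toFun g := (⟨Mb * g.1, g.2⟩, ⟨g.1 - Nb * (Mb * g.1), by
    simp [Matrix.mul_sub, ← Matrix.mul_assoc, hMN]⟩)
  invFun sk := ⟨Nb * sk.1.1 + sk.2.1, by
    show Mb * (Nb * sk.1.1 + sk.2.1) ∈ S
    rw [Matrix.mul_add, ← Matrix.mul_assoc, hMN, Matrix.one_mul, sk.2.2, add_zero]
    exact sk.1.2⟩
  left_inv g := by
    ext : 1
    simp
  right_inv sk := by
    ext : 2
    · show Mb * (Nb * sk.1.1 + sk.2.1) = sk.1.1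
      rw [Matrix.mul_add, ← Matrix.mul_assoc, hMN, Matrix.one_mul, sk.2.2, add_zero]
    · show Nb * sk.1.1 + sk.2.1 - Nb * (Mb * (Nb * sk.1.1 + sk.2.1)) = sk.2.1
      rw [Matrix.mul_add, ← Matrix.mul_assoc, hMN, Matrix.one_mul, sk.2.2, add_zero]
      abel

lemma prod_real (p a c : ℕ) (hp : 1 < p) (hac : a ≤ c) :
    ((∏ i : Fin a, (p ^ c - p ^ (i : ℕ)) : ℕ) : ℝ) / (p : ℝ) ^ (a * c)
      = ∏ i ∈ Finset.Icc ((c : ℤ) - (a : ℤ) + 1) (c : ℤ), (1 - (p : ℝ) ^ (-i)) := by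
  have hp0 : (0 : ℝ) < p := by positivity
  have himg : Finset.Icc ((c : ℤ) - (a : ℤ) + 1) (c : ℤ)
      = (Finset.range a).image (fun j : ℕ => (c : ℤ) - j) := by
    ext i
    simp only [Finset.mem_Icc, Finset.mem_image, Finset.mem_range]
    constructor
    · intro ⟨h1, h2⟩
      refine ⟨((c : ℤ) - i).toNat, ?_, ?_⟩ <;> omega
    · rintro ⟨j, hj, rfl⟩; omega
  rw [himg, Finset.prod_image (by intro x _ y _ h; have h' : (c : ℤ) - x = c - y := h; omega)]
  rw [Nat.cast_prod, Fin.prod_univ_eq_prod_range (fun i => ((p ^ c - p ^ i : ℕ) : ℝ))]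
  have hpc : (p : ℝ) ^ (a * c) = ∏ _j ∈ Finset.range a, (p : ℝ) ^ c := by
    rw [Finset.prod_const, Finset.card_range, ← pow_mul, mul_comm]
  rw [hpc, ← Finset.prod_div_distrib]
  refine Finset.prod_congr rfl fun j hj => ?_
  rw [Finset.mem_range] at hj
  have hjc : j ≤ c := le_trans (le_of_lt hj) hac
  rw [Nat.cast_sub (pow_le_pow_right₀ (le_of_lt hp) hjc)]
  push_cast
  rw [sub_div, div_self (by positivity)]
  congr 1
  rw [neg_sub, ← zpow_natCast (p : ℝ) j, ← zpow_natCast (p : ℝ) c, ← zpow_sub₀ (ne_of_gt hp0)]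

end ProbCompAux

open ProbCompAux

/-- Let `f : ℤ_p^b ↠ ℤ_p^a` be a surjective linear map. For a Haar-random linear map
`g : ℤ_p^c → ℤ_p^b`, the probability that `f ∘ g` is surjective equals
`∏_{i=c-a+1}^{c} (1 - p^{-i})` (an empty or zero product handled with integer bounds). -/
theorem prob_comp_surjective
    (p : ℕ) [Fact p.Prime] (a b c : ℕ)
    [MeasurableSpace (Matrix (Fin b) (Fin c) ℤ_[p])]
    [BorelSpace (Matrix (Fin b) (Fin c) ℤ_[p])]
    (μ : Measure (Matrix (Fin b) (Fin c) ℤ_[p]))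
    [μ.IsAddHaarMeasure] [IsProbabilityMeasure μ]
    (f : (Fin b → ℤ_[p]) →ₗ[ℤ_[p]] (Fin a → ℤ_[p])) (hf : Function.Surjective f) :
    μ {g | Function.Surjective (f ∘ₗ Matrix.mulVecLin g)}
      = ENNReal.ofReal
          (∏ i ∈ Finset.Icc ((c : ℤ) - (a : ℤ) + 1) (c : ℤ), (1 - (p : ℝ) ^ (-i))) := by
  classical
  have hp : 1 < p := (Fact.out : p.Prime).one_lt
  set M := LinearMap.toMatrix' f with hM
  have hfM : M.mulVecLin = f := by
    rw [hM, ← Matrix.toLin'_apply', Matrix.toLin'_toMatrix']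
  obtain ⟨s, hs⟩ := f.exists_rightInverse_of_surjective (LinearMap.range_eq_top.mpr hf)
  set N := LinearMap.toMatrix' s with hNdef
  have hMN : M * N = 1 := by
    rw [hM, hNdef, ← LinearMap.toMatrix'_comp, hs, LinearMap.toMatrix'_id]
  set Mb := M.map (PadicInt.toZMod (p := p)) with hMb
  set Nb := N.map (PadicInt.toZMod (p := p)) with hNb
  have hMbNb : Mb * Nb = 1 := by
    rw [hMb, hNb, ← Matrix.map_mul, hMN]
    exact Matrix.map_one _ (map_zero _) (map_one _)
  set S' : Set (Matrix (Fin a) (Fin c) (ZMod p)) :=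
    {h' | Function.Surjective h'.mulVecLin} with hS'
  have hset : {g : Matrix (Fin b) (Fin c) ℤ_[p] | Function.Surjective (f ∘ₗ Matrix.mulVecLin g)}
      = red ⁻¹' ((fun h : Matrix (Fin b) (Fin c) (ZMod p) => Mb * h) ⁻¹' S') := by
    ext g
    simp only [Set.mem_setOf_eq, Set.mem_preimage, hS']
    rw [← hfM, ← Matrix.mulVecLin_mul]
    rw [surj_iff_red_surj (M * g), Matrix.map_mul]
    rfl
  rw [hset, meas_red_preimage μ]
  set k := Nat.card {h : Matrix (Fin b) (Fin c) (ZMod p) // Mb * h = 0} with hk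
  have hk0 : k ≠ 0 := by
    rw [hk]
    have : Nonempty {h : Matrix (Fin b) (Fin c) (ZMod p) // Mb * h = 0} :=
      ⟨⟨0, by simp⟩⟩
    simp [Nat.card_pos.ne']
  have hcardT : Nat.card ((fun h : Matrix (Fin b) (Fin c) (ZMod p) => Mb * h) ⁻¹' S')
      = Nat.card S' * k := by
    rw [Nat.card_congr (preimageEquiv Mb Nb hMbNb S'), Nat.card_prod]
  have hcardBC : Fintype.card (Matrix (Fin b) (Fin c) (ZMod p))
      = Nat.card (Matrix (Fin a) (Fin c) (ZMod p)) * k := by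
    rw [← Nat.card_eq_fintype_card]
    calc Nat.card (Matrix (Fin b) (Fin c) (ZMod p))
        = Nat.card ((fun h : Matrix (Fin b) (Fin c) (ZMod p) => Mb * h) ⁻¹'
            (Set.univ : Set (Matrix (Fin a) (Fin c) (ZMod p)))) := by
          rw [Set.preimage_univ]
          exact (Nat.card_congr (Equiv.Set.univ _)).symm
      _ = Nat.card (Set.univ : Set (Matrix (Fin a) (Fin c) (ZMod p)))
            * k := by
          rw [Nat.card_congr (preimageEquiv Mb Nb hMbNb Set.univ), Nat.card_prod]
      _ = Nat.card (Matrix (Fin a) (Fin c) (ZMod p)) * k := by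
          rw [Nat.card_congr (Equiv.Set.univ _)]
  rw [hcardT, hcardBC]
  have hka : Nat.card (Matrix (Fin a) (Fin c) (ZMod p)) = p ^ (a * c) := by
    rw [Nat.card_eq_fintype_card, Module.card_eq_pow_finrank (K := ZMod p), Module.finrank_matrix,
      ZMod.card]
    simp
  have hcancel : ((Nat.card S' * k : ℕ) : ENNReal)
      / ((Nat.card (Matrix (Fin a) (Fin c) (ZMod p)) * k : ℕ) : ENNReal)
      = (Nat.card S' : ENNReal) / (Nat.card (Matrix (Fin a) (Fin c) (ZMod p)) : ENNReal) := by
    push_cast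
    rw [ENNReal.mul_div_mul_right _ _ (by exact_mod_cast hk0) (by simp)]
  rw [hcancel, hka]
  have hcardS : Nat.card S' = Nat.card
      {h : Matrix (Fin a) (Fin c) (ZMod p) // Function.Surjective h.mulVecLin} :=
    Nat.card_congr (Equiv.subtypeEquivRight (fun _ => Iff.rfl))
  by_cases hac : a ≤ c
  · rw [hcardS, card_surj_matrices _ a c hac, ZMod.card]
    rw [← prod_real p a c hp hac]
    rw [ENNReal.ofReal_div_of_pos (by positivity), ENNReal.ofReal_natCast]
    congr 1
    rw [← ENNReal.ofReal_natCast (p ^ (a * c))]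
    push_cast
    rfl
  · push_neg at hac
    rw [hcardS, card_surj_matrices_zero _ a c hac]
    have hzero : (∏ i ∈ Finset.Icc ((c : ℤ) - (a : ℤ) + 1) (c : ℤ),
        (1 - (p : ℝ) ^ (-i))) = 0 := by
      apply Finset.prod_eq_zero (i := 0)
      · rw [Finset.mem_Icc]; omega
      · norm_num
    rw [hzero]
    simp
end

section
/- The number of nilpotent n×n matrices over the finite field F_q equals q^{n²−n}. -/
open Module Submodule LinearMap Set

open scoped Classical
set_option linter.unusedSectionVars false

namespace FineHerstein

variable {F : Type} [Field F] [Fintype F]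

/-- The number of nilpotent `m × m` matrices over `F`. -/
noncomputable def nu (F : Type) [Field F] [Fintype F] (m : ℕ) : ℕ :=
  Nat.card {M : Matrix (Fin m) (Fin m) F // IsNilpotent M}

lemma card_nilpotent_subtype_congr {A B : Type*} [Semiring A] [Semiring B] (e : A ≃+* B) :
    Nat.card {a : A // IsNilpotent a} = Nat.card {b : B // IsNilpotent b} :=
  Nat.card_congr (Equiv.subtypeEquiv e.toEquiv (fun a =>
    ⟨fun h => h.map e, fun h => by simpa using h.map e.symm⟩))

lemma card_nilpotent_end (W : Type*) [AddCommGroup W] [Module F W] [FiniteDimensional F W] :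
    Nat.card {g : Module.End F W // IsNilpotent g} = nu F (finrank F W) :=
  card_nilpotent_subtype_congr (algEquivMatrix (finBasis F W)).toRingEquiv

lemma card_linearMap (W₁ W₂ : Type*) [AddCommGroup W₁] [Module F W₁] [FiniteDimensional F W₁]
    [AddCommGroup W₂] [Module F W₂] [FiniteDimensional F W₂] :
    Nat.card (W₁ →ₗ[F] W₂) = Fintype.card F ^ (finrank F W₁ * finrank F W₂) := by
  rw [Nat.card_congr (LinearMap.toMatrix (finBasis F W₁) (finBasis F W₂)).toEquiv,
    Nat.card_eq_fintype_card]
  show Fintype.card (Fin (finrank F W₂) → Fin (finrank F W₁) → F) = _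
  rw [Fintype.card_fun, Fintype.card_fun, Fintype.card_fin, Fintype.card_fin, ← pow_mul]

lemma card_submodule {n : ℕ} (W : Submodule F (Fin n → F)) :
    Nat.card W = Fintype.card F ^ finrank F W := by
  rw [Nat.card_eq_fintype_card]
  exact card_eq_pow_finrank

/-- nilpotent endomorphism to the power of the finrank is zero -/
lemma pow_finrank_eq_zero {W : Type*} [AddCommGroup W] [Module F W] [FiniteDimensional F W]
    {φ : Module.End F W} (h : IsNilpotent φ) : φ ^ (finrank F W) = 0 := by
  have h2 := h.charpoly_eq_X_pow_finrank
  have h3 := φ.aeval_self_charpoly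
  rwa [h2, map_pow, Polynomial.aeval_X] at h3

lemma isNilpotent_of_restrict_mapQ {V : Type*} [AddCommGroup V] [Module F V]
    {A : Module.End F V} {W : Submodule F V} (h₀ : ∀ x ∈ W, A x ∈ W)
    (h1 : IsNilpotent (A.restrict h₀))
    (h2 : IsNilpotent (W.mapQ W A (fun x hx => h₀ x hx))) : IsNilpotent A := by
  have hle : W ≤ W.comap A := fun x hx => h₀ x hx
  obtain ⟨l, hl⟩ := h1
  obtain ⟨m, hm⟩ := h2
  refine ⟨l + m, ?_⟩
  ext x
  have hx : (A ^ m) x ∈ W := by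
    have h4 : W.mapQ W (A ^ m) (W.le_comap_pow_of_le_comap hle m) = (W.mapQ W A hle) ^ m :=
      Submodule.mapQ_pow W hle m
    have h5 := congrArg (fun f => f (W.mkQ x)) h4
    simp only [hm, LinearMap.zero_apply] at h5
    rw [Submodule.mkQ_apply, Submodule.mapQ_apply] at h5
    exact (Submodule.Quotient.mk_eq_zero _).mp h5
  have h6 : (A ^ (l + m)) x = (A ^ l) ((A ^ m) x) := by
    rw [pow_add]; rfl
  have h7 := congrArg (fun f => f (⟨(A ^ m) x, hx⟩ : W)) hl
  rw [Module.End.pow_restrict] at h7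
  simp only [LinearMap.zero_apply, LinearMap.restrict_apply] at h7
  rw [LinearMap.zero_apply, h6]
  exact congrArg Subtype.val h7

lemma conj_isNilpotent_iff {M N : Type*} [AddCommGroup M] [Module F M] [AddCommGroup N]
    [Module F N] (e : M ≃ₗ[F] N) (g : Module.End F M) :
    IsNilpotent (e.conj g) ↔ IsNilpotent g := by
  have key : ∀ m : ℕ, (e.conj g) ^ m = e.conj (g ^ m) := by
    intro m
    induction m with
    | zero => simp [Module.End.one_eq_id, LinearEquiv.conj_id]
    | succ m ih =>
        rw [pow_succ, pow_succ, ih, Module.End.mul_eq_comp, Module.End.mul_eq_comp,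
          LinearEquiv.conj_comp]
  constructor
  · rintro ⟨m, hm⟩
    refine ⟨m, ?_⟩
    rw [key] at hm
    exact e.conj.injective (by rw [hm, map_zero])
  · rintro ⟨m, hm⟩
    exact ⟨m, by rw [key, hm, map_zero]⟩

section Krylov

variable {n : ℕ}

/-- The Krylov iterates of `v` under `A`. -/
noncomputable def kry (A : Module.End F (Fin n → F)) (v : Fin n → F) (d : ℕ) :
    Fin d → (Fin n → F) := fun i => (A ^ (i : ℕ)) v

/-- The set of `d` such that the `d`-th iterate lies in the span of the previous ones. -/
def kset (A : Module.End F (Fin n → F)) (v : Fin n → F) : Set ℕ :=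
  {d | (A ^ d) v ∈ span F (Set.range (kry A v d))}

lemma kry_succ (A : Module.End F (Fin n → F)) (v : Fin n → F) (d : ℕ) :
    kry A v (d + 1) = Fin.snoc (kry A v d) ((A ^ d) v) := by
  funext i
  induction i using Fin.lastCases with
  | last => simp [kry, Fin.snoc_last]
  | cast i => simp [kry, Fin.snoc_castSucc]

lemma kry_indep (A : Module.End F (Fin n → F)) (v : Fin n → F) (k : ℕ)
    (h : ∀ d < k, d ∉ kset A v) : LinearIndependent F (kry A v k) := by
  induction k with
  | zero => exact linearIndependent_empty_type
  | succ k ih =>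
      rw [kry_succ, linearIndependent_fin_snoc]
      exact ⟨ih (fun d hd => h d (Nat.lt_succ_of_lt hd)), h k (Nat.lt_succ_self k)⟩

lemma kset_nonempty (A : Module.End F (Fin n → F)) (v : Fin n → F) :
    (kset A v).Nonempty := by
  by_contra hcon
  push_neg at hcon
  rw [Set.eq_empty_iff_forall_notMem] at hcon
  have hind := kry_indep A v (n + 1) (fun d _ => hcon d)
  have hle := hind.fintype_card_le_finrank
  rw [Fintype.card_fin, Module.finrank_fin_fun] at hle
  omega

/-- The Krylov degree. -/
noncomputable def kdeg (A : Module.End F (Fin n → F)) (v : Fin n → F) : ℕ :=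
  sInf (kset A v)

lemma kdeg_mem (A : Module.End F (Fin n → F)) (v : Fin n → F) :
    (A ^ kdeg A v) v ∈ span F (Set.range (kry A v (kdeg A v))) :=
  Nat.sInf_mem (kset_nonempty A v)

lemma not_mem_of_lt_kdeg (A : Module.End F (Fin n → F)) (v : Fin n → F) {d : ℕ}
    (hd : d < kdeg A v) : d ∉ kset A v :=
  Nat.notMem_of_lt_sInf hd

lemma kdeg_indep (A : Module.End F (Fin n → F)) (v : Fin n → F) :
    LinearIndependent F (kry A v (kdeg A v)) :=
  kry_indep A v _ (fun _ hd => not_mem_of_lt_kdeg A v hd)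

lemma kdeg_le (A : Module.End F (Fin n → F)) (v : Fin n → F) : kdeg A v ≤ n := by
  have hle := (kdeg_indep A v).fintype_card_le_finrank
  rwa [Fintype.card_fin, Module.finrank_fin_fun] at hle

/-- The index type: a dimension `k ≤ n` together with a linearly independent `k`-tuple. -/
abbrev Idx (F : Type) [Field F] (n : ℕ) : Type :=
  Σ k : Fin (n + 1), {w : Fin (k : ℕ) → (Fin n → F) // LinearIndependent F w}

/-- The classifying map sending a pair `(A, v)` to its Krylov data. -/
noncomputable def psi (p : Module.End F (Fin n → F) × (Fin n → F)) : Idx F n :=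
  ⟨⟨kdeg p.1 p.2, Nat.lt_succ_of_le (kdeg_le p.1 p.2)⟩, kry p.1 p.2 (kdeg p.1 p.2),
    kdeg_indep p.1 p.2⟩

/-- Safe evaluation of the tuple in an index. -/
noncomputable def idxEval (i : Idx F n) (d : ℕ) : Fin n → F :=
  if h : d < (i.fst : ℕ) then i.snd.val ⟨d, h⟩ else 0

lemma idx_ext {k₁ k₂ : Fin (n + 1)} {w₁ : Fin (k₁ : ℕ) → Fin n → F}
    {w₂ : Fin (k₂ : ℕ) → Fin n → F} {h₁ : LinearIndependent F w₁} {h₂ : LinearIndependent F w₂}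
    (hk : k₁ = k₂) (hw : ∀ i : Fin (k₁ : ℕ), w₁ i = w₂ ⟨(i : ℕ), hk ▸ i.isLt⟩) :
    (⟨k₁, w₁, h₁⟩ : Idx F n) = ⟨k₂, w₂, h₂⟩ := by
  subst hk
  congr 1
  exact Subtype.ext (funext fun i => (hw i).trans (congrArg w₂ (Fin.ext rfl)))

lemma psi_eq_iff (A : Module.End F (Fin n → F)) (v : Fin n → F) (k : Fin (n + 1))
    (w : Fin (k : ℕ) → Fin n → F) (hw : LinearIndependent F w) :
    psi (A, v) = ⟨k, w, hw⟩ ↔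
      ((∀ i : Fin (k : ℕ), (A ^ (i : ℕ)) v = w i) ∧
        (A ^ (k : ℕ)) v ∈ span F (Set.range w)) := by
  constructor
  · intro h
    have hk : kdeg A v = (k : ℕ) := by
      have := congrArg (fun i : Idx F n => (i.fst : ℕ)) h
      simpa [psi] using this
    have he : ∀ d : ℕ, idxEval (psi (A, v)) d = idxEval (⟨k, w, hw⟩ : Idx F n) d :=
      fun d => congrFun (congrArg idxEval h) d
    have h1 : ∀ i : Fin (k : ℕ), (A ^ (i : ℕ)) v = w i := by
      intro i
      have := he (i : ℕ)
      rw [idxEval, idxEval, dif_pos, dif_pos] at this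
      · simpa [psi, kry] using this
      · exact i.isLt
      · show (i : ℕ) < ((⟨kdeg A v, _⟩ : Fin (n+1)) : ℕ)
        simp only [hk]
        exact i.isLt
    refine ⟨h1, ?_⟩
    have hmem := kdeg_mem A v
    have hfun : kry A v (kdeg A v) = fun i : Fin (kdeg A v) => w ⟨(i : ℕ), hk ▸ i.isLt⟩ := by
      funext i
      exact h1 ⟨(i : ℕ), hk ▸ i.isLt⟩ ▸ rfl
    rw [hk] at hmem
    rw [show kry A v (k : ℕ) = w from funext fun i => h1 i] at hmem
    exact hmem
  · rintro ⟨h1, h2⟩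
    have hkset : (k : ℕ) ∈ kset A v := by
      show (A ^ (k : ℕ)) v ∈ span F (Set.range (kry A v (k : ℕ)))
      rw [show kry A v (k : ℕ) = w from funext fun i => h1 i]
      exact h2
    have hnot : ∀ d < (k : ℕ), d ∉ kset A v := by
      intro d hd hdmem
      have hrange : Set.range (kry A v d) ⊆ w '' {j : Fin (k : ℕ) | (j : ℕ) < d} := by
        rintro x ⟨i, rfl⟩
        exact ⟨⟨(i : ℕ), lt_trans i.isLt hd⟩, i.isLt, (h1 _).symm ▸ rfl⟩
      have hmem2 : w ⟨d, hd⟩ ∈ span F (w '' {j : Fin (k : ℕ) | (j : ℕ) < d}) := by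
        have := h1 ⟨d, hd⟩
        rw [← this]
        exact span_mono hrange hdmem
      exact hw.notMem_span_image (by simp : (⟨d, hd⟩ : Fin (k : ℕ)) ∉ _) hmem2
    have hk : kdeg A v = (k : ℕ) := by
      refine le_antisymm (Nat.sInf_le hkset) ?_
      by_contra hcon
      push_neg at hcon
      exact hnot _ hcon (Nat.sInf_mem (kset_nonempty A v))
    exact idx_ext (Fin.ext (by simpa using hk))
      (fun i => by
        show (A ^ (i : ℕ)) v = _
        rw [h1 ⟨(i : ℕ), _⟩])

end Krylov

section Fiber

variable {n : ℕ}

/-- Starting vector determined by the tuple `w`. -/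
noncomputable def v0 (kk : ℕ) (w : Fin kk → Fin n → F) : Fin n → F :=
  if h : 0 < kk then w ⟨0, h⟩ else 0

/-- Chain condition on `A`. -/
def Qc (kk : ℕ) (w : Fin kk → Fin n → F) (A : Module.End F (Fin n → F)) : Prop :=
  ∀ (i : ℕ) (h₁ : i < kk) (h₂ : i + 1 < kk), A (w ⟨i, h₁⟩) = w ⟨i + 1, h₂⟩

/-- Last-vector condition (general version). -/
def Rc (kk : ℕ) (w : Fin kk → Fin n → F) (A : Module.End F (Fin n → F)) : Prop :=
  ∀ h : 0 < kk, A (w ⟨kk - 1, Nat.sub_lt h Nat.one_pos⟩) ∈ span F (Set.range w)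

/-- Last-vector condition (nilpotent version). -/
def R0c (kk : ℕ) (w : Fin kk → Fin n → F) (A : Module.End F (Fin n → F)) : Prop :=
  ∀ h : 0 < kk, A (w ⟨kk - 1, Nat.sub_lt h Nat.one_pos⟩) = 0

lemma iter_eq {kk : ℕ} {w : Fin kk → Fin n → F} {A : Module.End F (Fin n → F)}
    (hQ : Qc kk w A) : ∀ (i : ℕ) (h : i < kk), (A ^ i) (v0 kk w) = w ⟨i, h⟩ := by
  intro i
  induction i with
  | zero => intro h; rw [pow_zero, Module.End.one_apply, v0, dif_pos h]
  | succ i ih =>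
      intro h
      have hi : i < kk := Nat.lt_of_succ_lt h
      rw [pow_succ', Module.End.mul_eq_comp, LinearMap.comp_apply, ih hi, hQ i hi h]

lemma conds_iff {kk : ℕ} {w : Fin kk → Fin n → F} (A : Module.End F (Fin n → F))
    (v : Fin n → F) :
    ((∀ i : Fin kk, (A ^ (i : ℕ)) v = w i) ∧ (A ^ kk) v ∈ span F (Set.range w)) ↔
      (v = v0 kk w ∧ Qc kk w A ∧ Rc kk w A) := by
  constructor
  · rintro ⟨h1, h2⟩
    have hv : v = v0 kk w := by
      rcases Nat.eq_zero_or_pos kk with h0 | hpos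
      · subst h0
        have : Set.range w = (∅ : Set (Fin n → F)) := Set.range_eq_empty w
        rw [pow_zero, Module.End.one_apply, this, span_empty, mem_bot] at h2
        rw [h2, v0, dif_neg (by omega)]
      · have := h1 ⟨0, hpos⟩
        rw [pow_zero, Module.End.one_apply] at this
        rw [this, v0, dif_pos hpos]
    refine ⟨hv, ?_, ?_⟩
    · intro i hi₁ hi₂
      have ha := h1 ⟨i, hi₁⟩
      have hb := h1 ⟨i + 1, hi₂⟩
      rw [← ha, ← hb]
      show A ((A ^ i) v) = (A ^ (i + 1)) v
      rw [pow_succ', Module.End.mul_eq_comp, LinearMap.comp_apply]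
    · intro hpos
      have ha := h1 ⟨kk - 1, Nat.sub_lt hpos Nat.one_pos⟩
      rw [← ha]
      show A ((A ^ (kk - 1)) v) ∈ span F (Set.range w)
      have hstep : A ((A ^ (kk - 1)) v) = (A ^ (kk - 1 + 1)) v := by
        rw [pow_succ', Module.End.mul_eq_comp, LinearMap.comp_apply]
      rw [hstep, show kk - 1 + 1 = kk from by omega]
      exact h2
  · rintro ⟨hv, hQ, hR⟩
    subst hv
    refine ⟨fun i => by simpa using iter_eq hQ (i : ℕ) i.isLt, ?_⟩
    rcases Nat.eq_zero_or_pos kk with h0 | hpos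
    · subst h0
      rw [pow_zero, Module.End.one_apply, v0, dif_neg (by omega)]
      exact zero_mem _
    · obtain ⟨m, rfl⟩ : ∃ m, kk = m + 1 := ⟨kk - 1, by omega⟩
      rw [pow_succ', Module.End.mul_eq_comp, LinearMap.comp_apply,
        iter_eq hQ m (by omega)]
      have := hR hpos
      convert this using 3 <;> simp
  
/-- Equivalence between the fiber (as pairs) and endomorphisms satisfying the chain conditions. -/
noncomputable def fiberEquiv (kk : ℕ) (w : Fin kk → Fin n → F)
    (PP : Module.End F (Fin n → F) → Prop) :
    {p : Module.End F (Fin n → F) × (Fin n → F) //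
      ((∀ i : Fin kk, (p.1 ^ (i : ℕ)) p.2 = w i) ∧
        (p.1 ^ kk) p.2 ∈ span F (Set.range w)) ∧ PP p.1}
    ≃ {A : Module.End F (Fin n → F) // (Qc kk w A ∧ Rc kk w A) ∧ PP A} where
  toFun p := ⟨p.1.1, ((conds_iff p.1.1 p.1.2).mp p.2.1).2, p.2.2⟩
  invFun A := ⟨(A.1, v0 kk w), (conds_iff A.1 (v0 kk w)).mpr ⟨rfl, A.2.1⟩, A.2.2⟩
  left_inv p := by
    have hv := ((conds_iff p.1.1 p.1.2).mp p.2.1).1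
    exact Subtype.ext (Prod.ext rfl hv.symm)
  right_inv A := rfl

section Split

variable (W C : Submodule F (Fin n → F)) (hC : IsCompl W C)

/-- Splitting an endomorphism into its actions on complementary submodules. -/
noncomputable def splitE :
    Module.End F (Fin n → F) ≃ ((W →ₗ[F] (Fin n → F)) × (C →ₗ[F] (Fin n → F))) where
  toFun A := (A ∘ₗ W.subtype, A ∘ₗ C.subtype)
  invFun fg := (fg.1.coprod fg.2) ∘ₗ ((prodEquivOfIsCompl W C hC).symm : (Fin n → F) →ₗ[F] W × C)
  left_inv A := by
    apply LinearMap.ext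
    intro x
    have hx : (((prodEquivOfIsCompl W C hC).symm x).1 : Fin n → F) +
        (((prodEquivOfIsCompl W C hC).symm x).2 : Fin n → F) = x := by
      conv_rhs => rw [← (prodEquivOfIsCompl W C hC).apply_symm_apply x]
      rw [coe_prodEquivOfIsCompl']
    simp only [LinearMap.comp_apply, LinearEquiv.coe_coe, LinearMap.coprod_apply,
      LinearMap.comp_apply, Submodule.coe_subtype]
    rw [← map_add, hx]
  right_inv fg := by
    refine Prod.ext ?_ ?_ <;> refine LinearMap.ext fun x => ?_ <;>
      simp only [LinearMap.comp_apply, Submodule.coe_subtype, LinearEquiv.coe_coe,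
        LinearMap.coprod_apply]
    · rw [prodEquivOfIsCompl_symm_apply_left, map_zero, add_zero]
    · rw [prodEquivOfIsCompl_symm_apply_right, map_zero, zero_add]

lemma splitE_fst_apply (A : Module.End F (Fin n → F)) (x : W) :
    ((splitE W C hC A).1) x = A (x : Fin n → F) := rfl

lemma splitE_snd_eq (A : Module.End F (Fin n → F)) : (splitE W C hC A).2 = A ∘ₗ C.subtype := rfl

/-- Splitting a map `C →ₗ V` into components along `W` and `C`. -/
noncomputable def splitE2 :
    (C →ₗ[F] (Fin n → F)) ≃ ((C →ₗ[F] W) × (C →ₗ[F] C)) where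
  toFun g := ((W.projectionOnto C hC) ∘ₗ g, (C.projectionOnto W hC.symm) ∘ₗ g)
  invFun hg := W.subtype ∘ₗ hg.1 + C.subtype ∘ₗ hg.2
  left_inv g := by
    apply LinearMap.ext
    intro x
    simp only [LinearMap.add_apply, LinearMap.comp_apply, Submodule.coe_subtype]
    exact Submodule.projection_add_projection_eq_self hC (g x)
  right_inv hg := by
    refine Prod.ext ?_ ?_ <;> refine LinearMap.ext fun x => ?_ <;>
      simp only [LinearMap.comp_apply, LinearMap.add_apply, Submodule.coe_subtype, map_add]
    · rw [Submodule.projectionOnto_apply_left hC,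
        Submodule.projectionOnto_apply_right hC, add_zero]
    · rw [Submodule.projectionOnto_apply_right hC.symm,
        Submodule.projectionOnto_apply_left hC.symm, zero_add]

lemma splitE2_snd_eq (g : C →ₗ[F] (Fin n → F)) :
    (splitE2 W C hC g).2 = (C.projectionOnto W hC.symm) ∘ₗ g := rfl

/-- Nilpotency of `A` is equivalent to nilpotency of the induced map on the complement. -/
lemma nilp_iff_aux (A : Module.End F (Fin n → F)) (h₀ : ∀ x ∈ W, A x ∈ W)
    (hres : IsNilpotent (A.restrict h₀)) :
    IsNilpotent A ↔
      IsNilpotent ((C.projectionOnto W hC.symm) ∘ₗ (A ∘ₗ C.subtype)) := by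
  set g : Module.End F C := (C.projectionOnto W hC.symm) ∘ₗ (A ∘ₗ C.subtype) with hg
  set e' : C ≃ₗ[F] ((Fin n → F) ⧸ W) := (quotientEquivOfIsCompl W C hC).symm with he'
  have hle : W ≤ W.comap A := fun x hx => h₀ x hx
  have hconj : W.mapQ W A hle = e'.conj g := by
    apply LinearMap.ext
    intro x
    obtain ⟨c, rfl⟩ := e'.surjective x
    have h1 : e' c = Submodule.Quotient.mk (c : Fin n → F) := by
      rw [he']
      rfl
    rw [LinearEquiv.conj_apply_apply, h1, Submodule.mapQ_apply]
    have h2 : e' (g c) = Submodule.Quotient.mk ((g c : Fin n → F)) := rfl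
    have h4 : e'.symm (Submodule.Quotient.mk (c : Fin n → F)) = c := by
      rw [← h1, LinearEquiv.symm_apply_apply]
    rw [h4, h2, Submodule.Quotient.eq]
    have hsum := Submodule.projection_add_projection_eq_self hC (A (c : Fin n → F))
    have h3 : (g c : Fin n → F) = (C.projectionOnto W hC.symm) (A (c : Fin n → F)) := rfl
    rw [h3]
    nth_rw 1 [← hsum]
    simpa using W.projection_apply_mem C hC (A (c : Fin n → F))
  constructor
  · intro hN
    have : IsNilpotent (W.mapQ W A hle) := Module.End.IsNilpotent.mapQ hle hN
    rw [hconj] at this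
    exact (conj_isNilpotent_iff e' g).mp this
  · intro hN
    have h5 : IsNilpotent (W.mapQ W A hle) := by
      rw [hconj]
      exact (conj_isNilpotent_iff e' g).mpr hN
    exact isNilpotent_of_restrict_mapQ h₀ hres h5

end Split

end Fiber

section FiberCard

variable {n : ℕ}

lemma w_mem_span {kk : ℕ} (w : Fin kk → Fin n → F) (j : Fin kk) :
    w j ∈ span F (Set.range w) :=
  subset_span (Set.mem_range_self j)

lemma maps_to_of_QR {kk : ℕ} {w : Fin kk → Fin n → F} {A : Module.End F (Fin n → F)}
    (hQ : Qc kk w A)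
    (hlast : ∀ h : 0 < kk, A (w ⟨kk - 1, Nat.sub_lt h Nat.one_pos⟩) ∈ span F (Set.range w)) :
    ∀ x ∈ span F (Set.range w), A x ∈ span F (Set.range w) := by
  have hsub : ∀ j : Fin kk, A (w j) ∈ span F (Set.range w) := by
    intro j
    by_cases h₂ : (j : ℕ) + 1 < kk
    · have := hQ j j.isLt h₂
      rw [Fin.eta] at this
      rw [this]
      exact w_mem_span w _
    · have hpos : 0 < kk := j.pos
      have hj : j = ⟨kk - 1, Nat.sub_lt hpos Nat.one_pos⟩ := Fin.ext (show (j : ℕ) = kk - 1 by have := j.isLt; omega)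
      rw [hj]
      exact hlast hpos
  have hle : span F (Set.range w) ≤ Submodule.comap A (span F (Set.range w)) := by
    rw [span_le]
    rintro x ⟨j, rfl⟩
    exact hsub j
  exact fun x hx => hle hx

lemma shift_pow_zero {kk : ℕ} {w : Fin kk → Fin n → F} {A : Module.End F (Fin n → F)}
    (hw : LinearIndependent F w) (hQ : Qc kk w A) (hR0 : R0c kk w A)
    (h₀ : ∀ x ∈ span F (Set.range w), A x ∈ span F (Set.range w)) :
    (A.restrict h₀) ^ kk = 0 := by
  have claim : ∀ (m : ℕ) (j : Fin kk), kk ≤ (j : ℕ) + m → (A ^ m) (w j) = 0 := by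
    intro m
    induction m with
    | zero => intro j hj; exact absurd hj (by have := j.isLt; omega)
    | succ m ih =>
        intro j hj
        have hs : (A ^ (m + 1)) (w j) = (A ^ m) (A (w j)) := by
          rw [pow_succ, Module.End.mul_eq_comp, LinearMap.comp_apply]
        rw [hs]
        by_cases h₂ : (j : ℕ) + 1 < kk
        · have := hQ j j.isLt h₂
          rw [Fin.eta] at this
          rw [this]
          exact ih ⟨(j : ℕ) + 1, h₂⟩ (show kk ≤ (j : ℕ) + 1 + m by omega)
        · have hpos : 0 < kk := j.pos
          have hj2 : j = ⟨kk - 1, Nat.sub_lt hpos Nat.one_pos⟩ := Fin.ext (show (j : ℕ) = kk - 1 by have := j.isLt; omega)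
          rw [hj2, hR0 hpos, map_zero]
  apply (Basis.span hw).ext
  intro j
  rw [Module.End.pow_restrict, LinearMap.zero_apply, LinearMap.restrict_apply]
  apply Subtype.ext
  show (A ^ kk) ((Basis.span hw j : Fin n → F)) = 0
  rw [Basis.span_apply]
  exact claim kk j (by omega)

lemma card_QR_fiber (kk : ℕ) (hkn : kk ≤ n) (w : Fin kk → Fin n → F)
    (hw : LinearIndependent F w) :
    Nat.card {A : Module.End F (Fin n → F) // Qc kk w A ∧ Rc kk w A} =
      Fintype.card F ^ kk * Fintype.card F ^ (n * (n - kk)) := by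
  obtain ⟨C, hC⟩ := Submodule.exists_isCompl (span F (Set.range w))
  set bw : Basis (Fin kk) F (span F (Set.range w)) := Basis.span hw with hbw
  have hWrank : finrank F (span F (Set.range w)) = kk := by
    rw [finrank_span_eq_card hw, Fintype.card_fin]
  have hCrank : finrank F C = n - kk := by
    have h := Submodule.finrank_add_eq_of_isCompl hC
    rw [hWrank, Module.finrank_fin_fun] at h
    omega
  set P : Fin kk → (Fin n → F) → Prop := fun j x =>
    (∀ h : (j : ℕ) + 1 < kk, x = w ⟨(j : ℕ) + 1, h⟩) ∧
      (¬((j : ℕ) + 1 < kk) → x ∈ span F (Set.range w)) with hP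
  have key : ∀ A : Module.End F (Fin n → F),
      (Qc kk w A ∧ Rc kk w A) ↔
        ∀ j : Fin kk, P j (((splitE (span F (Set.range w)) C hC) A).1 (bw j)) := by
    intro A
    have heval : ∀ j : Fin kk,
        ((splitE (span F (Set.range w)) C hC) A).1 (bw j) = A (w j) := by
      intro j
      rw [splitE_fst_apply, hbw, Basis.span_apply]
    constructor
    · rintro ⟨hQ, hR⟩ j
      rw [heval]
      constructor
      · intro h₂
        have := hQ j j.isLt h₂
        rwa [Fin.eta] at this
      · intro h₂
        have hpos : 0 < kk := j.pos
        have hj : j = ⟨kk - 1, Nat.sub_lt hpos Nat.one_pos⟩ := Fin.ext (show (j : ℕ) = kk - 1 by have := j.isLt; omega)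
        rw [hj]
        exact hR hpos
    · intro hPall
      constructor
      · intro i h₁ h₂
        have := (hPall ⟨i, h₁⟩).1 h₂
        rwa [heval] at this
      · intro hpos
        have := (hPall ⟨kk - 1, Nat.sub_lt hpos Nat.one_pos⟩).2 (show ¬(kk - 1 + 1 < kk) by omega)
        rwa [heval] at this
  have hcon : ∀ vals : Fin kk → (Fin n → F),
      (∀ j : Fin kk, P j (vals j)) ↔ (∀ j : Fin kk, P j ((bw.constr F vals) (bw j))) :=
    fun vals => forall_congr' fun j => by rw [Basis.constr_basis]
  have e1 := Equiv.subtypeEquiv (p := fun A => Qc kk w A ∧ Rc kk w A)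
    (q := fun fg => ∀ j : Fin kk, P j (fg.1 (bw j))) (splitE (span F (Set.range w)) C hC) key
  have e2 : {fg : ((span F (Set.range w)) →ₗ[F] (Fin n → F)) × (C →ₗ[F] (Fin n → F)) //
      ∀ j : Fin kk, P j (fg.1 (bw j))} ≃
      {f : (span F (Set.range w)) →ₗ[F] (Fin n → F) // ∀ j : Fin kk, P j (f (bw j))} ×
        (C →ₗ[F] (Fin n → F)) :=
    Equiv.prodSubtypeFstEquivSubtypeProd
      (p := fun f : (span F (Set.range w)) →ₗ[F] (Fin n → F) => ∀ j : Fin kk, P j (f (bw j)))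
  have e3 := Equiv.subtypeEquiv
    (p := fun vals : Fin kk → (Fin n → F) => ∀ j : Fin kk, P j (vals j))
    (q := fun f : (span F (Set.range w)) →ₗ[F] (Fin n → F) => ∀ j : Fin kk, P j (f (bw j)))
    (bw.constr F).toEquiv hcon
  have e4 : {vals : Fin kk → (Fin n → F) // ∀ j : Fin kk, P j (vals j)} ≃
      ∀ j : Fin kk, {x : Fin n → F // P j x} := Equiv.subtypePiEquivPi
  rw [Nat.card_congr (e1.trans e2), Nat.card_prod, Nat.card_congr (e3.symm.trans e4),
    Nat.card_pi]
  have hfac : ∀ j : Fin kk, Nat.card {x : Fin n → F // P j x} =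
      if (j : ℕ) + 1 < kk then 1 else Fintype.card F ^ kk := by
    intro j
    by_cases h₂ : (j : ℕ) + 1 < kk
    · rw [if_pos h₂]
      have hiff : ∀ x, P j x ↔ x = w ⟨(j : ℕ) + 1, h₂⟩ := by
        intro x
        constructor
        · intro hp; exact hp.1 h₂
        · rintro rfl; exact ⟨fun _ => rfl, fun hc => absurd h₂ hc⟩
      rw [Nat.card_congr (Equiv.subtypeEquivRight hiff)]
      haveI : Unique {x : Fin n → F // x = w ⟨(j : ℕ) + 1, h₂⟩} :=
        ⟨⟨⟨_, rfl⟩⟩, fun a => Subtype.ext a.2⟩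
      rw [Nat.card_unique]
    · rw [if_neg h₂]
      have hiff : ∀ x, P j x ↔ x ∈ span F (Set.range w) := by
        intro x
        constructor
        · intro hp; exact hp.2 h₂
        · intro hx; exact ⟨fun hc => absurd hc h₂, fun _ => hx⟩
      rw [Nat.card_congr (Equiv.subtypeEquivRight hiff)]
      have hcs := card_submodule (span F (Set.range w))
      rw [hWrank] at hcs
      exact hcs
  rw [Finset.prod_congr rfl (fun j _ => hfac j)]
  have hprod : (∏ j : Fin kk, if (j : ℕ) + 1 < kk then 1 else Fintype.card F ^ kk) =
      Fintype.card F ^ kk := by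
    rcases Nat.eq_zero_or_pos kk with h0 | hpos
    · subst h0; simp
    · rw [Finset.prod_eq_single ⟨kk - 1, Nat.sub_lt hpos Nat.one_pos⟩]
      · rw [if_neg (show ¬(kk - 1 + 1 < kk) by omega)]
      · intro b _ hb
        rw [if_pos]
        have hbv : (b : ℕ) ≠ kk - 1 := fun hc => hb (Fin.ext hc)
        have := b.isLt
        omega
      · intro hmem; exact absurd (Finset.mem_univ _) hmem
  rw [hprod, card_linearMap, hCrank, Module.finrank_fin_fun, Nat.mul_comm (n - kk) n]

lemma card_QRnilp_fiber (kk : ℕ) (hkn : kk ≤ n) (w : Fin kk → Fin n → F)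
    (hw : LinearIndependent F w) :
    Nat.card {A : Module.End F (Fin n → F) // (Qc kk w A ∧ Rc kk w A) ∧ IsNilpotent A} =
      Fintype.card F ^ (kk * (n - kk)) * nu F (n - kk) := by
  obtain ⟨C, hC⟩ := Submodule.exists_isCompl (span F (Set.range w))
  set bw : Basis (Fin kk) F (span F (Set.range w)) := Basis.span hw with hbw
  have hWrank : finrank F (span F (Set.range w)) = kk := by
    rw [finrank_span_eq_card hw, Fintype.card_fin]
  have hCrank : finrank F C = n - kk := by
    have h := Submodule.finrank_add_eq_of_isCompl hC
    rw [hWrank, Module.finrank_fin_fun] at h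
    omega
  -- Step 1 : replace `Rc` by `R0c`
  have hiff1 : ∀ A : Module.End F (Fin n → F),
      ((Qc kk w A ∧ Rc kk w A) ∧ IsNilpotent A) ↔
        ((Qc kk w A ∧ R0c kk w A) ∧ IsNilpotent A) := by
    intro A
    constructor
    · rintro ⟨⟨hQ, hR⟩, hN⟩
      refine ⟨⟨hQ, ?_⟩, hN⟩
      intro hpos
      have h₀ := maps_to_of_QR hQ (fun h => hR h)
      have hresN : IsNilpotent (A.restrict h₀) := Module.End.isNilpotent.restrict h₀ hN
      have hpow := pow_finrank_eq_zero hresN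
      rw [hWrank] at hpow
      have hv0 : v0 kk w = w ⟨0, hpos⟩ := dif_pos hpos
      have hv0mem : v0 kk w ∈ span F (Set.range w) := by rw [hv0]; exact w_mem_span w _
      have h5 : w ⟨kk - 1, Nat.sub_lt hpos Nat.one_pos⟩ = (A ^ (kk - 1)) (v0 kk w) :=
        (iter_eq hQ (kk - 1) (Nat.sub_lt hpos Nat.one_pos)).symm
      rw [h5]
      have h6 : A ((A ^ (kk - 1)) (v0 kk w)) = (A ^ (kk - 1 + 1)) (v0 kk w) := by
        rw [pow_succ', Module.End.mul_eq_comp, LinearMap.comp_apply]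
      rw [h6, show kk - 1 + 1 = kk from by omega]
      have h7 := congrArg (fun f => f (⟨v0 kk w, hv0mem⟩ : span F (Set.range w))) hpow
      rw [Module.End.pow_restrict] at h7
      simp only [LinearMap.zero_apply, LinearMap.restrict_apply] at h7
      exact congrArg Subtype.val h7
    · rintro ⟨⟨hQ, hR0⟩, hN⟩
      refine ⟨⟨hQ, fun hpos => ?_⟩, hN⟩
      rw [hR0 hpos]
      exact zero_mem _
  -- Step 2 : replace nilpotency of `A` by nilpotency of the induced map on `C`
  have hiff2 : ∀ A : Module.End F (Fin n → F),
      ((Qc kk w A ∧ R0c kk w A) ∧ IsNilpotent A) ↔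
        ((Qc kk w A ∧ R0c kk w A) ∧
          IsNilpotent ((C.projectionOnto (span F (Set.range w)) hC.symm) ∘ₗ
            (A ∘ₗ C.subtype))) := by
    intro A
    constructor
    · rintro ⟨⟨hQ, hR0⟩, hN⟩
      have h₀ := maps_to_of_QR hQ (fun h => by rw [hR0 h]; exact zero_mem _)
      exact ⟨⟨hQ, hR0⟩,
        (nilp_iff_aux (span F (Set.range w)) C hC A h₀ ⟨kk, shift_pow_zero hw hQ hR0 h₀⟩).mp hN⟩
    · rintro ⟨⟨hQ, hR0⟩, hN⟩
      have h₀ := maps_to_of_QR hQ (fun h => by rw [hR0 h]; exact zero_mem _)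
      exact ⟨⟨hQ, hR0⟩,
        (nilp_iff_aux (span F (Set.range w)) C hC A h₀ ⟨kk, shift_pow_zero hw hQ hR0 h₀⟩).mpr hN⟩
  -- Step 3 : transport along the splitting
  set u : (span F (Set.range w)) →ₗ[F] (Fin n → F) :=
    bw.constr F (fun j => if h : (j : ℕ) + 1 < kk then w ⟨(j : ℕ) + 1, h⟩ else 0) with hu
  have key : ∀ A : Module.End F (Fin n → F),
      ((Qc kk w A ∧ R0c kk w A) ∧
        IsNilpotent ((C.projectionOnto (span F (Set.range w)) hC.symm) ∘ₗ
          (A ∘ₗ C.subtype))) ↔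
      ((((splitE (span F (Set.range w)) C hC) A).1 = u) ∧
        IsNilpotent ((C.projectionOnto (span F (Set.range w)) hC.symm) ∘ₗ
          ((splitE (span F (Set.range w)) C hC) A).2)) := by
    intro A
    have heval : ∀ j : Fin kk,
        ((splitE (span F (Set.range w)) C hC) A).1 (bw j) = A (w j) := by
      intro j
      rw [splitE_fst_apply, hbw, Basis.span_apply]
    have hsnd : (splitE (span F (Set.range w)) C hC A).2 = A ∘ₗ C.subtype := rfl
    rw [hsnd]
    apply and_congr_left
    intro _
    constructor
    · rintro ⟨hQ, hR0⟩
      apply bw.ext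
      intro j
      rw [heval, hu, Basis.constr_basis]
      by_cases h₂ : (j : ℕ) + 1 < kk
      · rw [dif_pos h₂]
        have := hQ j j.isLt h₂
        rwa [Fin.eta] at this
      · rw [dif_neg h₂]
        have hpos : 0 < kk := j.pos
        have hj : j = ⟨kk - 1, Nat.sub_lt hpos Nat.one_pos⟩ := Fin.ext (show (j : ℕ) = kk - 1 by have := j.isLt; omega)
        rw [hj]
        exact hR0 hpos
    · intro hequ
      have heq : ∀ j : Fin kk, A (w j) =
          if h : (j : ℕ) + 1 < kk then w ⟨(j : ℕ) + 1, h⟩ else 0 := by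
        intro j
        rw [← heval j, hequ, hu, Basis.constr_basis]
      constructor
      · intro i h₁ h₂
        have := heq ⟨i, h₁⟩
        rwa [dif_pos h₂] at this
      · intro hpos
        have := heq ⟨kk - 1, Nat.sub_lt hpos Nat.one_pos⟩
        rwa [dif_neg (show ¬(kk - 1 + 1 < kk) by omega)] at this
  have e0 := Equiv.subtypeEquivRight (fun A => (hiff1 A).trans (hiff2 A))
  have e1 := Equiv.subtypeEquiv
    (p := fun A : Module.End F (Fin n → F) => (Qc kk w A ∧ R0c kk w A) ∧
      IsNilpotent ((C.projectionOnto (span F (Set.range w)) hC.symm) ∘ₗ (A ∘ₗ C.subtype)))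
    (q := fun fg => fg.1 = u ∧
      IsNilpotent ((C.projectionOnto (span F (Set.range w)) hC.symm) ∘ₗ fg.2))
    (splitE (span F (Set.range w)) C hC) key
  have e2 : {fg : ((span F (Set.range w)) →ₗ[F] (Fin n → F)) × (C →ₗ[F] (Fin n → F)) //
      fg.1 = u ∧ IsNilpotent ((C.projectionOnto (span F (Set.range w)) hC.symm) ∘ₗ fg.2)} ≃
      {f : (span F (Set.range w)) →ₗ[F] (Fin n → F) // f = u} ×
        {g : C →ₗ[F] (Fin n → F) //
          IsNilpotent ((C.projectionOnto (span F (Set.range w)) hC.symm) ∘ₗ g)} :=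
    Equiv.subtypeProdEquivProd (p := fun f => f = u)
      (q := fun g => IsNilpotent ((C.projectionOnto (span F (Set.range w)) hC.symm) ∘ₗ g))
  have e3 := Equiv.subtypeEquiv
    (p := fun g : C →ₗ[F] (Fin n → F) =>
      IsNilpotent ((C.projectionOnto (span F (Set.range w)) hC.symm) ∘ₗ g))
    (q := fun hg : (C →ₗ[F] (span F (Set.range w))) × (C →ₗ[F] C) => IsNilpotent hg.2)
    (splitE2 (span F (Set.range w)) C hC) (fun g => Iff.rfl)
  have e4 : {hg : (C →ₗ[F] (span F (Set.range w))) × (C →ₗ[F] C) // IsNilpotent hg.2} ≃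
      {hg : (C →ₗ[F] C) × (C →ₗ[F] (span F (Set.range w))) // IsNilpotent hg.1} :=
    (Equiv.prodComm _ _).symm.subtypeEquiv (fun hg => Iff.rfl)
  have e5 : {hg : (C →ₗ[F] C) × (C →ₗ[F] (span F (Set.range w))) // IsNilpotent hg.1} ≃
      {g : C →ₗ[F] C // IsNilpotent g} × (C →ₗ[F] (span F (Set.range w))) :=
    Equiv.prodSubtypeFstEquivSubtypeProd (p := fun g : Module.End F C => IsNilpotent g)
  rw [Nat.card_congr (((e0.trans e1).trans e2).trans
    (Equiv.prodCongr (Equiv.refl _) (((e3.trans e4).trans e5)))), Nat.card_prod, Nat.card_prod]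
  haveI : Unique {f : (span F (Set.range w)) →ₗ[F] (Fin n → F) // f = u} :=
    ⟨⟨⟨u, rfl⟩⟩, fun a => Subtype.ext a.2⟩
  rw [Nat.card_unique, one_mul]
  have hnil : Nat.card {g : C →ₗ[F] C // IsNilpotent g} = nu F (n - kk) := by
    have := card_nilpotent_end (F := F) C
    rwa [hCrank] at this
  rw [hnil, card_linearMap, hCrank, hWrank, Nat.mul_comm (n - kk) kk, Nat.mul_comm]

end FiberCard

section Master

variable {n : ℕ}

lemma master (PP : Module.End F (Fin n → F) → Prop) (fc : Fin (n + 1) → ℕ)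
    (hfc : ∀ (k : Fin (n + 1)) (w : Fin (k : ℕ) → Fin n → F) (hw : LinearIndependent F w),
      Nat.card {A : Module.End F (Fin n → F) // (Qc (k : ℕ) w A ∧ Rc (k : ℕ) w A) ∧ PP A} = fc k) :
    Nat.card {p : Module.End F (Fin n → F) × (Fin n → F) // PP p.1} =
      ∑ k : Fin (n + 1),
        (∏ i ∈ Finset.range (k : ℕ), (Fintype.card F ^ n - Fintype.card F ^ i)) * fc k := by
  haveI hfin1 : Finite (Module.End F (Fin n → F)) :=
    Finite.of_injective (fun f => (f : (Fin n → F) → (Fin n → F))) LinearMap.coe_injective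
  haveI : Fintype {p : Module.End F (Fin n → F) × (Fin n → F) // PP p.1} := Fintype.ofFinite _
  set X := {p : Module.End F (Fin n → F) × (Fin n → F) // PP p.1} with hX
  set χ : X → Idx F n := fun p => psi p.val with hχ
  have step1 : Nat.card X = ∑ i : Idx F n, Nat.card {x : X // χ x = i} := by
    rw [Nat.card_congr (Equiv.sigmaFiberEquiv χ).symm, Nat.card_eq_fintype_card,
      Fintype.card_sigma]
    exact Finset.sum_congr rfl (fun i _ => (Nat.card_eq_fintype_card).symm)
  have step2 : ∀ i : Idx F n, Nat.card {x : X // χ x = i} = fc i.1 := by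
    rintro ⟨k, w, hw⟩
    have ea := Equiv.subtypeSubtypeEquivSubtypeInter
      (fun p : Module.End F (Fin n → F) × (Fin n → F) => PP p.1)
      (fun p => psi p = ⟨k, w, hw⟩)
    have eb := Equiv.subtypeEquivRight
      (fun p : Module.End F (Fin n → F) × (Fin n → F) =>
        (and_comm (a := PP p.1) (b := psi p = ⟨k, w, hw⟩)))
    have ec := Equiv.subtypeEquivRight
      (fun p : Module.End F (Fin n → F) × (Fin n → F) =>
        (and_congr_left' (psi_eq_iff p.1 p.2 k w hw) :
          (psi p = ⟨k, w, hw⟩ ∧ PP p.1) ↔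
            (((∀ i : Fin (k : ℕ), (p.1 ^ (i : ℕ)) p.2 = w i) ∧
              (p.1 ^ (k : ℕ)) p.2 ∈ span F (Set.range w)) ∧ PP p.1)))
    rw [Nat.card_congr ((((ea.trans eb).trans ec).trans (fiberEquiv (k : ℕ) w PP)))]
    exact hfc k w hw
  rw [step1, Finset.sum_congr rfl (fun i _ => step2 i)]
  rw [← Finset.univ_sigma_univ, Finset.sum_sigma]
  apply Finset.sum_congr rfl
  intro k _
  have hconst : ∀ s : {w : Fin (k : ℕ) → Fin n → F // LinearIndependent F w},
      fc (⟨k, s⟩ : Idx F n).fst = fc k := fun s => rfl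
  rw [Finset.sum_congr rfl (fun s _ => hconst s), Finset.sum_const, smul_eq_mul]
  congr 1
  have hcl := card_linearIndependent (K := F) (V := Fin n → F) (k := (k : ℕ))
    (by rw [Module.finrank_fin_fun]; omega)
  rw [Module.finrank_fin_fun] at hcl
  rw [← Fin.prod_univ_eq_prod_range
    (fun i => Fintype.card F ^ n - Fintype.card F ^ i) (k : ℕ)]
  exact (Nat.card_eq_fintype_card
    (α := {w : Fin (k : ℕ) → Fin n → F // LinearIndependent F w})).symm.trans hcl

lemma identity_all (n : ℕ) :
    Fintype.card F ^ (n * n) * Fintype.card F ^ n =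
      ∑ k : Fin (n + 1),
        (∏ i ∈ Finset.range (k : ℕ), (Fintype.card F ^ n - Fintype.card F ^ i)) *
          (Fintype.card F ^ (k : ℕ) * Fintype.card F ^ (n * (n - (k : ℕ)))) := by
  have h := master (n := n) (fun _ => True)
    (fun k => Fintype.card F ^ (k : ℕ) * Fintype.card F ^ (n * (n - (k : ℕ))))
    (fun k w hw => by
      rw [Nat.card_congr (Equiv.subtypeEquivRight
        (fun A : Module.End F (Fin n → F) =>
          (and_iff_left trivial :
            ((Qc (k : ℕ) w A ∧ Rc (k : ℕ) w A) ∧ True) ↔ (Qc (k : ℕ) w A ∧ Rc (k : ℕ) w A))))]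
      exact card_QR_fiber (k : ℕ) (by omega) w hw)
  rw [← h]
  have h1 : Nat.card (Module.End F (Fin n → F)) = Fintype.card F ^ (n * n) := by
    have h2 := card_linearMap (F := F) (Fin n → F) (Fin n → F)
    rw [Module.finrank_fin_fun] at h2
    exact h2
  have hv : Nat.card (Fin n → F) = Fintype.card F ^ n := by
    rw [Nat.card_eq_fintype_card, card_eq_pow_finrank (K := F) (V := Fin n → F),
      Module.finrank_fin_fun]
  rw [Nat.card_congr (Equiv.subtypeUnivEquiv
    (p := fun p : Module.End F (Fin n → F) × (Fin n → F) => True) (fun _ => trivial)),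
    Nat.card_prod, h1, hv]

lemma identity_nil (n : ℕ) :
    nu F n * Fintype.card F ^ n =
      ∑ k : Fin (n + 1),
        (∏ i ∈ Finset.range (k : ℕ), (Fintype.card F ^ n - Fintype.card F ^ i)) *
          (Fintype.card F ^ ((k : ℕ) * (n - (k : ℕ))) * nu F (n - (k : ℕ))) := by
  have h := master (n := n) IsNilpotent
    (fun k => Fintype.card F ^ ((k : ℕ) * (n - (k : ℕ))) * nu F (n - (k : ℕ)))
    (fun k w hw => card_QRnilp_fiber (k : ℕ) (by omega) w hw)
  rw [← h]
  rw [Nat.card_congr (Equiv.prodSubtypeFstEquivSubtypeProd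
    (p := fun A : Module.End F (Fin n → F) => IsNilpotent A)), Nat.card_prod]
  congr 1
  · have := card_nilpotent_end (F := F) (Fin n → F)
    rw [Module.finrank_fin_fun] at this
    exact this.symm
  · rw [Nat.card_eq_fintype_card, card_eq_pow_finrank (K := F) (V := Fin n → F),
      Module.finrank_fin_fun]

theorem nu_eq (n : ℕ) : nu F n = Fintype.card F ^ (n * n - n) := by
  induction n using Nat.strong_induction_on with
  | _ n IH =>
    rcases Nat.eq_zero_or_pos n with h0 | hpos
    · subst h0
      haveI : Unique {M : Matrix (Fin 0) (Fin 0) F // IsNilpotent M} :=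
        ⟨⟨⟨0, ⟨1, by simp⟩⟩⟩, fun a => Subtype.ext (Subsingleton.elim _ _)⟩
      rw [nu, Nat.card_unique]
      simp
    · have hq2 : 2 ≤ Fintype.card F := Fintype.one_lt_card
      -- abbreviation for readability is avoided; use literal expressions
      have hA : Fintype.card F ^ (n * n) * Fintype.card F ^ n = Fintype.card F ^ (n * n) +
          (∑ i : Fin n, (∏ j ∈ Finset.range ((i : ℕ) + 1),
            (Fintype.card F ^ n - Fintype.card F ^ j)) *
              Fintype.card F ^ ((n - (i : ℕ) - 1) * (n - 1))) * Fintype.card F ^ n := by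
        have h := identity_all (F := F) n
        rw [Fin.sum_univ_succ] at h
        simp only [Fin.val_succ, Fin.val_zero, pow_zero, one_mul, Nat.sub_zero,
          Finset.prod_range_zero] at h
        have hterm : ∀ i : Fin n,
            (∏ j ∈ Finset.range ((i : ℕ) + 1), (Fintype.card F ^ n - Fintype.card F ^ j)) *
              (Fintype.card F ^ ((i : ℕ) + 1) * Fintype.card F ^ (n * (n - ((i : ℕ) + 1)))) =
            (∏ j ∈ Finset.range ((i : ℕ) + 1), (Fintype.card F ^ n - Fintype.card F ^ j)) *
              Fintype.card F ^ ((n - (i : ℕ) - 1) * (n - 1)) * Fintype.card F ^ n := by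
          intro i
          have hi := i.isLt
          obtain ⟨m, hm⟩ : ∃ m, n = (i : ℕ) + 1 + m := ⟨n - (i : ℕ) - 1, by omega⟩
          have e1 : n - ((i : ℕ) + 1) = m := by omega
          have e2 : n - (i : ℕ) - 1 = m := by omega
          have e3 : n - 1 = (i : ℕ) + m := by omega
          have hexp : ((i : ℕ) + 1) + n * m = m * ((i : ℕ) + m) + n := by
            have hgen : ∀ a b N : ℕ, N = a + 1 + b → a + 1 + N * b = b * (a + b) + N :=
              fun a b N hN => by subst hN; ring
            exact hgen _ _ _ hm
          rw [e1, e2, e3, ← pow_add, mul_assoc, ← pow_add, hexp]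
        rw [Finset.sum_congr rfl (fun i _ => hterm i), ← Finset.sum_mul] at h
        exact h
      have hB : nu F n * Fintype.card F ^ n = nu F n +
          (∑ i : Fin n, (∏ j ∈ Finset.range ((i : ℕ) + 1),
            (Fintype.card F ^ n - Fintype.card F ^ j)) *
              Fintype.card F ^ ((n - (i : ℕ) - 1) * (n - 1))) := by
        have h := identity_nil (F := F) n
        rw [Fin.sum_univ_succ] at h
        simp only [Fin.val_succ, Fin.val_zero, pow_zero, one_mul, Nat.sub_zero, Nat.zero_mul,
          Finset.prod_range_zero] at h
        have hterm : ∀ i : Fin n,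
            (∏ j ∈ Finset.range ((i : ℕ) + 1), (Fintype.card F ^ n - Fintype.card F ^ j)) *
              (Fintype.card F ^ (((i : ℕ) + 1) * (n - ((i : ℕ) + 1))) *
                nu F (n - ((i : ℕ) + 1))) =
            (∏ j ∈ Finset.range ((i : ℕ) + 1), (Fintype.card F ^ n - Fintype.card F ^ j)) *
              Fintype.card F ^ ((n - (i : ℕ) - 1) * (n - 1)) := by
          intro i
          have hi := i.isLt
          have hIH := IH (n - ((i : ℕ) + 1)) (by omega)
          rw [hIH, ← pow_add]
          obtain ⟨m, hm⟩ : ∃ m, n = (i : ℕ) + 1 + m := ⟨n - (i : ℕ) - 1, by omega⟩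
          have e1 : n - ((i : ℕ) + 1) = m := by omega
          have e2 : n - (i : ℕ) - 1 = m := by omega
          have e3 : n - 1 = (i : ℕ) + m := by omega
          rw [e1, e2, e3]
          have hsub : m * m - m = m * (m - 1) := by
            rcases Nat.eq_zero_or_pos m with hz | hmpos
            · subst hz; simp
            · have h1 : m * m = m * (m - 1) + m := by
                have h2 : m - 1 + 1 = m := by omega
                calc m * m = m * ((m - 1) + 1) := by rw [h2]
                _ = m * (m - 1) + m := by ring
              omega
          have hexp : ((i : ℕ) + 1) * m + (m * m - m) = m * ((i : ℕ) + m) := by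
            rw [hsub]
            rcases Nat.eq_zero_or_pos m with hz | hmpos
            · subst hz; simp
            · calc ((i : ℕ) + 1) * m + m * (m - 1) = m * (((i : ℕ) + 1) + (m - 1)) := by ring
                _ = m * ((i : ℕ) + m) := by
                  congr 1
                  omega
          rw [hexp]
        rw [Finset.sum_congr rfl (fun i _ => hterm i)] at h
        exact h
      have hqn : 0 < Fintype.card F ^ n := pow_pos (by omega) n
      have hD : Fintype.card F ^ (n * n) = Fintype.card F ^ (n * n - n) * Fintype.card F ^ n := by
        rw [← pow_add]
        congr 1
        have hnn : n ≤ n * n := Nat.le_mul_of_pos_left n hpos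
        omega
      have hA' : Fintype.card F ^ (n * n - n) * Fintype.card F ^ n =
          Fintype.card F ^ (n * n - n) +
          (∑ i : Fin n, (∏ j ∈ Finset.range ((i : ℕ) + 1),
            (Fintype.card F ^ n - Fintype.card F ^ j)) *
              Fintype.card F ^ ((n - (i : ℕ) - 1) * (n - 1))) := by
        apply Nat.eq_of_mul_eq_mul_right hqn
        rw [add_mul, ← hD]
        exact hA
      have hBz : (nu F n : ℤ) * (Fintype.card F : ℤ) ^ n = (nu F n : ℤ) +
          ((∑ i : Fin n, (∏ j ∈ Finset.range ((i : ℕ) + 1),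
            (Fintype.card F ^ n - Fintype.card F ^ j)) *
              Fintype.card F ^ ((n - (i : ℕ) - 1) * (n - 1)) : ℕ) : ℤ) := by
        exact_mod_cast hB
      have hAz : (Fintype.card F : ℤ) ^ (n * n - n) * (Fintype.card F : ℤ) ^ n =
          (Fintype.card F : ℤ) ^ (n * n - n) +
          ((∑ i : Fin n, (∏ j ∈ Finset.range ((i : ℕ) + 1),
            (Fintype.card F ^ n - Fintype.card F ^ j)) *
              Fintype.card F ^ ((n - (i : ℕ) - 1) * (n - 1)) : ℕ) : ℤ) := by
        exact_mod_cast hA'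
      have hz : (((nu F n : ℤ)) - (Fintype.card F : ℤ) ^ (n * n - n)) *
          ((Fintype.card F : ℤ) ^ n - 1) = 0 := by
        linear_combination hBz - hAz
      have hne : ((Fintype.card F : ℤ) ^ n - 1) ≠ 0 := by
        have h1 : (1 : ℤ) < (Fintype.card F : ℤ) ^ n := by
          exact_mod_cast Nat.one_lt_pow (by omega) (by omega)
        omega
      have hfin : (nu F n : ℤ) = (Fintype.card F : ℤ) ^ (n * n - n) := by
        rcases mul_eq_zero.mp hz with h | h
        · linarith [sub_eq_zero.mp h]
        · exact absurd h hne
      exact_mod_cast hfin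

end Master

end FineHerstein

/-- Fine–Herstein: the number of nilpotent `n×n` matrices over `F_q` equals `q^{n²-n}`. -/
theorem card_nilpotent_matrices
    (q n : ℕ) (F : Type) [Field F] [Fintype F] (hq : Fintype.card F = q) :
    Nat.card {M : Matrix (Fin n) (Fin n) F // IsNilpotent M} = q ^ (n ^ 2 - n) := by
  subst hq
  have h := FineHerstein.nu_eq (F := F) n
  rw [show n ^ 2 = n * n from pow_two n]
  exact h
end
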